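/- arXiv:2112.07822 — 10 statements merged into one kernel-verified Lean document; each statement's English description precedes it below -/
import Mathlib

section
/- The function μ(s) := d/ds (1 − s·cot s) on (−π, π) is odd, strictly increasing, and equals (2s − sin(2s))/(2 sin²s) for s ≠ 0; moreover it is a bijection (diffeomorphism) from (−π, π) onto ℝ. -/
open Real Set Filter Topology

/-- `sin` is real-analytic. -/
lemma an_sin' (x : ℝ) : AnalyticAt ℝ Real.sin x := by
  have h2 : AnalyticAt ℝ (fun y : ℝ => (Complex.sin (y:ℂ)).re) x :=
    (Complex.reCLM.analyticAt _).comp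
      (((Complex.differentiable_sin.analyticAt (x:ℂ)).restrictScalars).comp
        (Complex.ofRealCLM.analyticAt x))
  have : (fun y : ℝ => (Complex.sin (y:ℂ)).re) = Real.sin := by
    funext y; rw [← Complex.ofReal_sin, Complex.ofReal_re]
  rwa [this] at h2

/-- `cos` is real-analytic. -/
lemma an_cos' (x : ℝ) : AnalyticAt ℝ Real.cos x := by
  have h2 : AnalyticAt ℝ (fun y : ℝ => (Complex.cos (y:ℂ)).re) x :=
    (Complex.reCLM.analyticAt _).comp
      (((Complex.differentiable_cos.analyticAt (x:ℂ)).restrictScalars).comp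
        (Complex.ofRealCLM.analyticAt x))
  have : (fun y : ℝ => (Complex.cos (y:ℂ)).re) = Real.cos := by
    funext y; rw [← Complex.ofReal_cos, Complex.ofReal_re]
  rwa [this] at h2

/-- The analytic extension of `sin x / x`. -/
noncomputable def sinc' : ℝ → ℝ := dslope Real.sin 0

lemma sinc'_zero : sinc' 0 = 1 := by
  simp [sinc', dslope_same, Real.deriv_sin]

lemma sinc'_ne {x : ℝ} (hx : x ≠ 0) : sinc' x = Real.sin x / x := by
  rw [sinc', dslope_of_ne _ hx, slope_def_field]
  simp

lemma an_sinc' (x : ℝ) : AnalyticAt ℝ sinc' x := by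
  rcases eq_or_ne x 0 with rfl | hx
  · obtain ⟨p, hp⟩ := an_sin' 0
    exact ⟨p.fslope, hp.has_fpower_series_dslope_fslope⟩
  · apply AnalyticAt.congr ((an_sin' x).div analyticAt_id hx)
    filter_upwards [isOpen_ne.mem_nhds hx] with y hy
    exact (sinc'_ne hy).symm

lemma sin_sub_mul_cos_pos {x : ℝ} (hx : x ∈ Ioo 0 Real.pi) :
    0 < Real.sin x - x * Real.cos x := by
  set φ : ℝ → ℝ := fun s => Real.sin s - s * Real.cos s with hφ
  have hder : ∀ s : ℝ, HasDerivAt φ (s * Real.sin s) s := by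
    intro s
    have h1 : HasDerivAt (fun t : ℝ => t * Real.cos t)
        (1 * Real.cos s + s * (-Real.sin s)) s :=
      (hasDerivAt_id s).mul (Real.hasDerivAt_cos s)
    have := (Real.hasDerivAt_sin s).sub h1
    exact this.congr_deriv (by ring)
  have hmono : StrictMonoOn φ (Icc 0 Real.pi) := by
    apply strictMonoOn_of_deriv_pos (convex_Icc 0 Real.pi)
    · exact fun s _ => ((hder s).continuousAt).continuousWithinAt
    · intro s hs
      rw [interior_Icc] at hs
      rw [(hder s).deriv]
      exact mul_pos hs.1 (Real.sin_pos_of_pos_of_lt_pi hs.1 hs.2)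
  have h0 : φ 0 = 0 := by simp [hφ]
  have := hmono (left_mem_Icc.2 Real.pi_pos.le)
    ⟨hx.1.le, hx.2.le⟩ hx.1
  rw [h0] at this
  simpa [hφ] using this

theorem statement1
    (f : ℝ → ℝ) (hf : ∀ s, f s = if s = 0 then 0 else 1 - s * Real.cot s)
    (μ : ℝ → ℝ) (hμ : ∀ s, μ s = deriv f s) :
    (∀ s ∈ Ioo (-Real.pi) Real.pi, μ (-s) = -μ s) ∧
    StrictMonoOn μ (Ioo (-Real.pi) Real.pi) ∧
    (∀ s ∈ Ioo (-Real.pi) Real.pi, s ≠ 0 →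
      μ s = (2 * s - Real.sin (2 * s)) / (2 * Real.sin s ^ 2)) ∧
    Set.BijOn μ (Ioo (-Real.pi) Real.pi) Set.univ ∧
    ContDiffOn ℝ (⊤ : ℕ∞) μ (Ioo (-Real.pi) Real.pi) := by
  have hμf : μ = deriv f := funext hμ
  subst hμf
  -- f is even
  have hfe : ∀ s, f (-s) = f s := by
    intro s
    rcases eq_or_ne s 0 with rfl | hs
    · simp
    · rw [hf, hf, if_neg (neg_ne_zero.2 hs), if_neg hs,
        Real.cot_eq_cos_div_sin, Real.cot_eq_cos_div_sin,
        Real.cos_neg, Real.sin_neg, div_neg]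
      ring
  -- μ is odd (everywhere)
  have hodd : ∀ s : ℝ, deriv f (-s) = -deriv f s := by
    intro s
    have : deriv (fun x => f (-x)) s = -deriv f (-s) := deriv_comp_neg f s
    have h2 : (fun x => f (-x)) = f := funext hfe
    rw [h2] at this
    linarith [this]
  have hμ0 : deriv f 0 = 0 := by
    have := hodd 0
    simp only [neg_zero] at this
    linarith
  -- sin is nonzero on the punctured interval
  have hsin_ne : ∀ x ∈ Ioo (-Real.pi) Real.pi, x ≠ 0 → Real.sin x ≠ 0 := by
    intro x hx hx0
    rcases hx0.lt_or_gt with h | h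
    · have : 0 < Real.sin (-x) :=
        Real.sin_pos_of_pos_of_lt_pi (by linarith) (by linarith [hx.1])
      rw [Real.sin_neg] at this
      linarith
    · exact (Real.sin_pos_of_pos_of_lt_pi h hx.2).ne'
  -- sinc' is nonzero on the interval
  have hsinc_ne : ∀ x ∈ Ioo (-Real.pi) Real.pi, sinc' x ≠ 0 := by
    intro x hx
    rcases eq_or_ne x 0 with rfl | hx0
    · rw [sinc'_zero]; norm_num
    · rw [sinc'_ne hx0]
      exact div_ne_zero (hsin_ne x hx hx0) hx0
  -- f agrees with the analytic function H on the interval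
  set H : ℝ → ℝ := fun x => 1 - Real.cos x / sinc' x with hH
  have hfH : ∀ x ∈ Ioo (-Real.pi) Real.pi, f x = H x := by
    intro x hx
    rcases eq_or_ne x 0 with rfl | hx0
    · rw [hf]; simp [hH, sinc'_zero]
    · have hs := hsin_ne x hx hx0
      rw [hf, if_neg hx0, hH]
      simp only
      rw [Real.cot_eq_cos_div_sin, sinc'_ne hx0]
      field_simp
  have hIoo : IsOpen (Ioo (-Real.pi) Real.pi) := isOpen_Ioo
  -- f is analytic on the interval
  have hf_an : AnalyticOnNhd ℝ f (Ioo (-Real.pi) Real.pi) := by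
    intro x hx
    apply AnalyticAt.congr (analyticAt_const.sub
      ((an_cos' x).div (an_sinc' x) (hsinc_ne x hx)))
    filter_upwards [hIoo.mem_nhds hx] with y hy
    exact (hfH y hy).symm
  have hderiv_an : AnalyticOnNhd ℝ (deriv f) (Ioo (-Real.pi) Real.pi) := hf_an.deriv
  have hcontdiff : ContDiffOn ℝ (⊤ : ℕ∞) (deriv f) (Ioo (-Real.pi) Real.pi) :=
    fun x hx => ((hderiv_an x hx).contDiffAt).contDiffWithinAt
  have hcont : ContinuousOn (deriv f) (Ioo (-Real.pi) Real.pi) := hcontdiff.continuousOn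
  -- the explicit formula for μ off 0
  have hform : ∀ x ∈ Ioo (-Real.pi) Real.pi, x ≠ 0 →
      deriv f x = (2 * x - Real.sin (2 * x)) / (2 * Real.sin x ^ 2) := by
    intro x hx hx0
    have hs := hsin_ne x hx hx0
    have hq : HasDerivAt (fun s => Real.cos s / Real.sin s)
        ((-Real.sin x * Real.sin x - Real.cos x * Real.cos x) / Real.sin x ^ 2) x :=
      (Real.hasDerivAt_cos x).div (Real.hasDerivAt_sin x) hs
    have hp : HasDerivAt (fun s => 1 - s * (Real.cos s / Real.sin s))
        (0 - (1 * (Real.cos x / Real.sin x) +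
          x * ((-Real.sin x * Real.sin x - Real.cos x * Real.cos x) / Real.sin x ^ 2))) x :=
      (hasDerivAt_const x (1:ℝ)).sub ((hasDerivAt_id x).mul hq)
    have hfd : HasDerivAt f
        (0 - (1 * (Real.cos x / Real.sin x) +
          x * ((-Real.sin x * Real.sin x - Real.cos x * Real.cos x) / Real.sin x ^ 2))) x := by
      apply hp.congr_of_eventuallyEq
      filter_upwards [isOpen_ne.mem_nhds hx0] with y hy
      rw [hf, if_neg hy, Real.cot_eq_cos_div_sin]
    rw [hfd.deriv]
    have hpyth : Real.sin x ^ 2 + Real.cos x ^ 2 = 1 := Real.sin_sq_add_cos_sq x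
    rw [Real.sin_two_mul]
    field_simp
    linear_combination x * hpyth
  -- derivative of μ is positive on (0, π)
  have hμderiv : ∀ x ∈ Ioo 0 Real.pi, ∃ d, HasDerivAt (deriv f) d x ∧ 0 < d := by
    intro x hx
    have hxI : x ∈ Ioo (-Real.pi) Real.pi := ⟨by linarith [hx.1, Real.pi_pos], hx.2⟩
    have hx0 : x ≠ 0 := hx.1.ne'
    have hs := hsin_ne x hxI hx0
    have hspos : 0 < Real.sin x := Real.sin_pos_of_pos_of_lt_pi hx.1 hx.2
    have hden : (2 : ℝ) * Real.sin x ^ 2 ≠ 0 := by positivity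
    -- numerator derivative
    have hnum : HasDerivAt (fun s => 2 * s - Real.sin (2 * s))
        (2 - Real.cos (2 * x) * 2) x := by
      have h1 : HasDerivAt (fun s : ℝ => 2 * s) 2 x := by
        simpa using (hasDerivAt_id x).const_mul (2:ℝ)
      have h2 : HasDerivAt (fun s : ℝ => Real.sin (2 * s)) (Real.cos (2 * x) * 2) x :=
        (Real.hasDerivAt_sin (2 * x)).comp x h1
      exact h1.sub h2
    have hden' : HasDerivAt (fun s => 2 * Real.sin s ^ 2)
        (2 * (2 * Real.sin x ^ 1 * Real.cos x)) x := by
      have := ((Real.hasDerivAt_sin x).pow 2).const_mul (2:ℝ)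
      simpa using this
    have hG : HasDerivAt (fun s => (2 * s - Real.sin (2 * s)) / (2 * Real.sin s ^ 2))
        (((2 - Real.cos (2 * x) * 2) * (2 * Real.sin x ^ 2) -
          (2 * x - Real.sin (2 * x)) * (2 * (2 * Real.sin x ^ 1 * Real.cos x))) /
          (2 * Real.sin x ^ 2) ^ 2) x := hnum.div hden' hden
    have hμG : HasDerivAt (deriv f)
        (((2 - Real.cos (2 * x) * 2) * (2 * Real.sin x ^ 2) -
          (2 * x - Real.sin (2 * x)) * (2 * (2 * Real.sin x ^ 1 * Real.cos x))) /
          (2 * Real.sin x ^ 2) ^ 2) x := by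
      apply hG.congr_of_eventuallyEq
      filter_upwards [(hIoo.inter isOpen_ne).mem_nhds ⟨hxI, hx0⟩] with y hy
      exact hform y hy.1 hy.2
    refine ⟨_, hμG, ?_⟩
    apply div_pos
    · have hpyth : Real.sin x ^ 2 + Real.cos x ^ 2 = 1 := Real.sin_sq_add_cos_sq x
      have key : ((2 - Real.cos (2 * x) * 2) * (2 * Real.sin x ^ 2) -
          (2 * x - Real.sin (2 * x)) * (2 * (2 * Real.sin x ^ 1 * Real.cos x))) =
          8 * Real.sin x * (Real.sin x - x * Real.cos x) := by
        rw [Real.cos_two_mul, Real.sin_two_mul]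
        nlinarith [hpyth]
      rw [key]
      have := sin_sub_mul_cos_pos hx
      positivity
    · positivity
  -- strict monotonicity on [0, π)
  have hmono1 : StrictMonoOn (deriv f) (Ico 0 Real.pi) := by
    apply strictMonoOn_of_deriv_pos (convex_Ico 0 Real.pi)
    · apply hcont.mono
      intro y hy
      exact ⟨by linarith [hy.1, Real.pi_pos], hy.2⟩
    · intro y hy
      rw [interior_Ico] at hy
      obtain ⟨d, hd, hdpos⟩ := hμderiv y hy
      rw [hd.deriv]
      exact hdpos
  -- strict monotonicity on the whole interval
  have hmono : StrictMonoOn (deriv f) (Ioo (-Real.pi) Real.pi) := by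
    intro a ha b hb hab
    rcases le_or_gt 0 a with h0a | h0a
    · exact hmono1 ⟨h0a, ha.2⟩ ⟨by linarith, hb.2⟩ hab
    · rcases le_or_gt b 0 with hb0 | hb0
      · have h1 : deriv f (-b) < deriv f (-a) :=
          hmono1 ⟨by linarith, by linarith [hb.1]⟩ ⟨by linarith, by linarith [ha.1]⟩
            (by linarith)
        have := hodd a; have := hodd b
        linarith [hodd a, hodd b, h1]
      · have h1 : deriv f 0 < deriv f b :=
          hmono1 ⟨le_refl 0, Real.pi_pos⟩ ⟨hb0.le, hb.2⟩ hb0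
        have h2 : deriv f 0 < deriv f (-a) :=
          hmono1 ⟨le_refl 0, Real.pi_pos⟩ ⟨by linarith, by linarith [ha.1]⟩ (by linarith)
        have h3 := hodd a
        rw [hμ0] at h1 h2
        linarith
  -- oddness on the interval
  refine ⟨fun s _ => hodd s, hmono, hform, ?_, hcontdiff⟩
  -- Bijectivity
  have htend : Tendsto (deriv f) (𝓝[<] Real.pi) atTop := by
    have hev : deriv f =ᶠ[𝓝[<] Real.pi]
        fun x => (2 * x - Real.sin (2 * x)) * (2 * Real.sin x ^ 2)⁻¹ := by
      filter_upwards [Ioo_mem_nhdsLT_of_mem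
        (show Real.pi ∈ Ioc 0 Real.pi from ⟨Real.pi_pos, le_refl _⟩)] with y hy
      rw [hform y ⟨by linarith [hy.1, Real.pi_pos], hy.2⟩ hy.1.ne', div_eq_mul_inv]
    rw [Filter.tendsto_congr' hev]
    apply Filter.Tendsto.pos_mul_atTop (show (0:ℝ) < 2 * Real.pi by positivity)
    · have : ContinuousAt (fun x : ℝ => 2 * x - Real.sin (2 * x)) Real.pi := by
        fun_prop
      have h := this.tendsto.mono_left (nhdsWithin_le_nhds (s := Iio Real.pi))
      simpa [Real.sin_two_pi] using h
    · apply Filter.Tendsto.inv_tendsto_nhdsGT_zero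
      rw [tendsto_nhdsWithin_iff]
      constructor
      · have : ContinuousAt (fun x : ℝ => 2 * Real.sin x ^ 2) Real.pi := by fun_prop
        have h := this.tendsto.mono_left (nhdsWithin_le_nhds (s := Iio Real.pi))
        simpa [Real.sin_pi] using h
      · filter_upwards [Ioo_mem_nhdsLT_of_mem
          (show Real.pi ∈ Ioc 0 Real.pi from ⟨Real.pi_pos, le_refl _⟩)] with y hy
        have : 0 < Real.sin y := Real.sin_pos_of_pos_of_lt_pi hy.1 hy.2
        have : 0 < 2 * Real.sin y ^ 2 := by positivity
        exact this
  -- for every y there is a point with large value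
  have hbig : ∀ y : ℝ, ∃ b ∈ Ioo (-Real.pi) Real.pi, y < deriv f b := by
    intro y
    have h1 : ∀ᶠ x in 𝓝[<] Real.pi, y < deriv f x := htend.eventually_gt_atTop y
    have h2 : ∀ᶠ x in 𝓝[<] Real.pi, x ∈ Ioo 0 Real.pi :=
      Ioo_mem_nhdsLT_of_mem ⟨Real.pi_pos, le_refl _⟩
    obtain ⟨b, hb1, hb2⟩ := (h1.and h2).exists
    exact ⟨b, ⟨by linarith [hb2.1, Real.pi_pos], hb2.2⟩, hb1⟩
  have hsurj : Set.SurjOn (deriv f) (Ioo (-Real.pi) Real.pi) Set.univ := by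
    intro y _
    obtain ⟨b, hb, hby⟩ := hbig y
    obtain ⟨b', hb', hb'y⟩ := hbig (-y)
    set a := -b' with ha_def
    have ha : a ∈ Ioo (-Real.pi) Real.pi := ⟨by linarith [hb'.2], by linarith [hb'.1]⟩
    have hay : deriv f a < y := by
      have := hodd b'
      rw [show deriv f a = deriv f (-b') from rfl, this]
      linarith
    have hab : a < b := by
      by_contra h
      push_neg at h
      rcases eq_or_lt_of_le h with h | h
      · rw [h] at hby; linarith
      · have := hmono hb ha h; linarith
    have hsub : Icc a b ⊆ Ioo (-Real.pi) Real.pi := fun z hz =>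
      ⟨by linarith [ha.1, hz.1], by linarith [hb.2, hz.2]⟩
    have := intermediate_value_Ioo hab.le (hcont.mono hsub)
    obtain ⟨x, hx, hxy⟩ := this ⟨hay, hby⟩
    exact ⟨x, ⟨by linarith [ha.1, hx.1], by linarith [hb.2, hx.2]⟩, hxy⟩
  exact ⟨fun x _ => mem_univ _, hmono.injOn, hsurj⟩
end

section
/- Let f(s) = 1 − s·cot(s) on (−π, π) (with f(0)=0) and ψ(s) = f(s)/s² (with ψ(0) = 1/3). Then for all 0 < r < π: f''(r) > f'(r)/r > 2ψ(r) ≥ 2ψ(0) > 0. -/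
open Real Set

private lemma aux1 {x : ℝ} (hx : 0 < x) (hπ : x < Real.pi) :
    0 < Real.sin x - x * Real.cos x := by
  have key : StrictMonoOn (fun y => Real.sin y - y * Real.cos y) (Icc 0 Real.pi) := by
    apply strictMonoOn_of_deriv_pos (convex_Icc 0 Real.pi)
    · fun_prop
    · intro y hy
      rw [interior_Icc] at hy
      have h : HasDerivAt (fun y => Real.sin y - y * Real.cos y) (y * Real.sin y) y := by
        have := (Real.hasDerivAt_sin y).sub ((hasDerivAt_id y).mul (Real.hasDerivAt_cos y))
        refine this.congr_deriv (Eq.symm ?_)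
        try simp
        try ring
      rw [h.deriv]
      exact mul_pos hy.1 (Real.sin_pos_of_pos_of_lt_pi hy.1 hy.2)
  have := key (left_mem_Icc.2 Real.pi_pos.le) ⟨hx.le, hπ.le⟩ hx
  simpa using this

private lemma aux2 {x : ℝ} (hx : 0 < x) (hπ : x < Real.pi) :
    0 ≤ 3 * (Real.sin x - x * Real.cos x) - x ^ 2 * Real.sin x := by
  have key : StrictMonoOn
      (fun y => 3 * (Real.sin y - y * Real.cos y) - y ^ 2 * Real.sin y) (Icc 0 Real.pi) := by
    apply strictMonoOn_of_deriv_pos (convex_Icc 0 Real.pi)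
    · fun_prop
    · intro y hy
      rw [interior_Icc] at hy
      have h : HasDerivAt
          (fun y => 3 * (Real.sin y - y * Real.cos y) - y ^ 2 * Real.sin y)
          (y * (Real.sin y - y * Real.cos y)) y := by
        have := (((Real.hasDerivAt_sin y).sub
            ((hasDerivAt_id y).mul (Real.hasDerivAt_cos y))).const_mul 3).sub
            ((hasDerivAt_pow 2 y).mul (Real.hasDerivAt_sin y))
        refine this.congr_deriv (Eq.symm ?_)
        try simp
        try ring
      rw [h.deriv]
      exact mul_pos hy.1 (aux1 hy.1 hy.2)
  have := key (left_mem_Icc.2 Real.pi_pos.le) ⟨hx.le, hπ.le⟩ hx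
  simp only [Real.sin_zero, Real.cos_zero] at this
  linarith [this]

private lemma aux3 {x : ℝ} (hx : 0 < x) (hπ : x < Real.pi) :
    0 < 2 * x - 3 * (Real.sin x * Real.cos x) + x * Real.cos x ^ 2 - x * Real.sin x ^ 2 := by
  have key : StrictMonoOn
      (fun y => 2 * y - 3 * (Real.sin y * Real.cos y) + y * Real.cos y ^ 2 - y * Real.sin y ^ 2)
      (Icc 0 Real.pi) := by
    apply strictMonoOn_of_deriv_pos (convex_Icc 0 Real.pi)
    · fun_prop
    · intro y hy
      rw [interior_Icc] at hy
      have h : HasDerivAt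
          (fun y => 2 * y - 3 * (Real.sin y * Real.cos y) + y * Real.cos y ^ 2
            - y * Real.sin y ^ 2)
          (4 * Real.sin y * (Real.sin y - y * Real.cos y)) y := by
        have := ((((hasDerivAt_id y).const_mul 2).sub
            (((Real.hasDerivAt_sin y).mul (Real.hasDerivAt_cos y)).const_mul 3)).add
            ((hasDerivAt_id y).mul ((Real.hasDerivAt_cos y).pow 2))).sub
            ((hasDerivAt_id y).mul ((Real.hasDerivAt_sin y).pow 2))
        refine this.congr_deriv (Eq.symm ?_)
        have hp := Real.sin_sq_add_cos_sq y
        simp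
        nlinarith [hp]
      rw [h.deriv]
      exact mul_pos (mul_pos (by norm_num : (0:ℝ) < 4)
        (Real.sin_pos_of_pos_of_lt_pi hy.1 hy.2)) (aux1 hy.1 hy.2)
  have := key (left_mem_Icc.2 Real.pi_pos.le) ⟨hx.le, hπ.le⟩ hx
  simp only [Real.sin_zero, Real.cos_zero] at this
  linarith [this]

private lemma aux4 {x : ℝ} (hx : 0 < x) (hπ : x < Real.pi) :
    0 < x ^ 2 + x * Real.sin x * Real.cos x - 2 * Real.sin x ^ 2 := by
  have key : StrictMonoOn
      (fun y => y ^ 2 + y * Real.sin y * Real.cos y - 2 * Real.sin y ^ 2)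
      (Icc 0 Real.pi) := by
    apply strictMonoOn_of_deriv_pos (convex_Icc 0 Real.pi)
    · fun_prop
    · intro y hy
      rw [interior_Icc] at hy
      have h : HasDerivAt
          (fun y => y ^ 2 + y * Real.sin y * Real.cos y - 2 * Real.sin y ^ 2)
          (2 * y - 3 * (Real.sin y * Real.cos y) + y * Real.cos y ^ 2
            - y * Real.sin y ^ 2) y := by
        have := (((hasDerivAt_pow 2 y).add
            (((hasDerivAt_id y).mul (Real.hasDerivAt_sin y)).mul
              (Real.hasDerivAt_cos y))).sub
            (((Real.hasDerivAt_sin y).pow 2).const_mul 2))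
        refine this.congr_deriv (Eq.symm ?_)
        try simp
        try ring
      rw [h.deriv]
      exact aux3 hy.1 hy.2
  have := key (left_mem_Icc.2 Real.pi_pos.le) ⟨hx.le, hπ.le⟩ hx
  simpa using this

set_option maxHeartbeats 1000000 in
theorem statement2
    (f ψ : ℝ → ℝ)
    (hf : ∀ s, f s = if s = 0 then 0 else 1 - s * Real.cot s)
    (hψ : ∀ s, ψ s = if s = 0 then 1/3 else (1 - s * Real.cot s) / s ^ 2) :
    ∀ r : ℝ, 0 < r → r < Real.pi →
      deriv (deriv f) r > deriv f r / r ∧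
      deriv f r / r > 2 * ψ r ∧
      2 * ψ r ≥ 2 * ψ 0 ∧
      2 * ψ 0 > 0 := by
  intro r hr hπ
  -- first derivative formula on (0, π)
  have hder : ∀ s ∈ Ioo 0 Real.pi,
      deriv f s = (s - Real.sin s * Real.cos s) / Real.sin s ^ 2 := by
    intro s hs
    have hsin : Real.sin s ≠ 0 := (Real.sin_pos_of_pos_of_lt_pi hs.1 hs.2).ne'
    have hG : HasDerivAt (fun t => 1 - t * (Real.cos t / Real.sin t))
        ((s - Real.sin s * Real.cos s) / Real.sin s ^ 2) s := by
      have h1 : HasDerivAt (fun t => Real.cos t / Real.sin t)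
          ((-Real.sin s * Real.sin s - Real.cos s * Real.cos s) / Real.sin s ^ 2) s :=
        (Real.hasDerivAt_cos s).div (Real.hasDerivAt_sin s) hsin
      have h3 := (hasDerivAt_const s (1 : ℝ)).sub ((hasDerivAt_id s).mul h1)
      refine h3.congr_deriv (Eq.symm ?_)
      have hp := Real.sin_sq_add_cos_sq s
      field_simp
      linear_combination (-(id s)) * hp - id_eq s
    have heq : f =ᶠ[nhds s] fun t => 1 - t * (Real.cos t / Real.sin t) := by
      filter_upwards [eventually_ne_nhds hs.1.ne'] with t ht
      rw [hf t, if_neg ht, Real.cot_eq_cos_div_sin]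
    rw [heq.deriv_eq, hG.deriv]
  have hrs : r ∈ Ioo 0 Real.pi := ⟨hr, hπ⟩
  have hsin : 0 < Real.sin r := Real.sin_pos_of_pos_of_lt_pi hr hπ
  set u := Real.sin r with hu_def
  set v := Real.cos r with hv_def
  have hid : u ^ 2 + v ^ 2 = 1 := Real.sin_sq_add_cos_sq r
  -- second derivative
  have hder2 : deriv (deriv f) r = 2 * (u - r * v) / u ^ 3 := by
    have hev : deriv f =ᶠ[nhds r]
        fun s => (s - Real.sin s * Real.cos s) / Real.sin s ^ 2 := by
      filter_upwards [Ioo_mem_nhds hr hπ] with s hs using hder s hs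
    rw [hev.deriv_eq]
    have hG : HasDerivAt (fun s => (s - Real.sin s * Real.cos s) / Real.sin s ^ 2)
        (2 * (u - r * v) / u ^ 3) r := by
      have hnum : HasDerivAt (fun s => s - Real.sin s * Real.cos s)
          (1 - (Real.cos r * Real.cos r + Real.sin r * -Real.sin r)) r :=
        (hasDerivAt_id r).sub ((Real.hasDerivAt_sin r).mul (Real.hasDerivAt_cos r))
      have hden : HasDerivAt (fun s => Real.sin s ^ 2)
          (((2 : ℕ) : ℝ) * Real.sin r ^ (2 - 1) * Real.cos r) r :=
        (Real.hasDerivAt_sin r).pow 2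
      have h2 := hnum.div hden (pow_ne_zero 2 hsin.ne')
      refine h2.congr_deriv (Eq.symm ?_)
      rw [← hu_def, ← hv_def]
      have hu0 : u ≠ 0 := hsin.ne'
      field_simp
      linear_combination (-(u ^ 2)) * hid
    exact hG.deriv
  have hF1 : deriv f r = (r - u * v) / u ^ 2 := hder r hrs
  have hψr : ψ r = (u - r * v) / (u * r ^ 2) := by
    rw [hψ r, if_neg hr.ne', Real.cot_eq_cos_div_sin, ← hu_def, ← hv_def]
    field_simp
    try ring
  have hψ0 : ψ 0 = 1 / 3 := by rw [hψ 0]; try norm_num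
  -- key positivity facts
  have hp : 0 < u - r * v := aux1 hr hπ
  have h3f : 0 ≤ 3 * (u - r * v) - r ^ 2 * u := aux2 hr hπ
  have h2f : 0 < r ^ 2 + r * u * v - 2 * u ^ 2 := aux4 hr hπ
  -- the core inequality E > 0
  have hE : 0 < r * u - 2 * r ^ 2 * v + u ^ 2 * v := by
    rcases le_or_gt (2 * r * v) u with hcase | hcase
    · -- 2rv ≤ u
      have hEr : 0 < r * (r * u - 2 * r ^ 2 * v + u ^ 2 * v) := by
        nlinarith [mul_nonneg (sub_nonneg.2 hcase) h2f.le,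
          mul_pos (mul_pos hp hp) hsin]
      by_contra hcon
      push_neg at hcon
      linarith [mul_nonpos_of_nonneg_of_nonpos hr.le hcon, hEr]
    · -- u < 2rv
      set p := u - r * v with hp_def
      have hidp : r ^ 2 * u ^ 2 + (u - p) ^ 2 = r ^ 2 := by
        have : u - p = r * v := by rw [hp_def]; ring
        rw [this]
        nlinarith [hid]
      have h0 : r ^ 2 * (1 - u ^ 2) - (u - p) ^ 2 = 0 := by linarith
      have hkey : r ^ 2 * (2 * p - u) + u ^ 2 * (u - p)
          = r ^ 2 * (2 * p - u) * u ^ 2 + p * (3 * u - 2 * p) * (u - p) := by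
        linear_combination (2 * p - u) * h0
      have h2p : 2 * p ≤ u := by rw [hp_def]; linarith
      have hQ : 0 < r ^ 2 * (2 * p - u) * u ^ 2 + p * (3 * u - 2 * p) * (u - p) := by
        nlinarith [mul_nonneg (mul_nonneg h3f (le_of_lt hsin)) (sub_nonneg.2 h2p),
          mul_pos (mul_pos hp hp) (by linarith : (0:ℝ) < u + 2 * p)]
      have hE' : 0 < r ^ 2 * (2 * p - u) + u ^ 2 * (u - p) := by
        rw [hkey]; exact hQ
      by_contra hcon
      push_neg at hcon
      have : r * (r * u - 2 * r ^ 2 * v + u ^ 2 * v)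
          = r ^ 2 * (2 * p - u) + u ^ 2 * (u - p) := by rw [hp_def]; ring
      linarith [mul_nonpos_of_nonneg_of_nonpos hr.le hcon, hE', this]
  refine ⟨?_, ?_, ?_, ?_⟩
  · -- f'' > f'/r
    rw [hder2, hF1, gt_iff_lt, ← sub_pos]
    have key : 2 * (u - r * v) / u ^ 3 - (r - u * v) / u ^ 2 / r
        = (r * u - 2 * r ^ 2 * v + u ^ 2 * v) / (r * u ^ 3) := by
      field_simp
      ring
    rw [key]
    positivity
  · -- f'/r > 2ψ(r)
    rw [hF1, hψr, gt_iff_lt, ← sub_pos]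
    have key : (r - u * v) / u ^ 2 / r - 2 * ((u - r * v) / (u * r ^ 2))
        = (r ^ 2 + r * u * v - 2 * u ^ 2) / (r ^ 2 * u ^ 2) := by
      field_simp
      ring
    rw [key]
    positivity
  · -- 2ψ(r) ≥ 2ψ(0)
    rw [hψr, hψ0, ge_iff_le, ← sub_nonneg]
    have key : 2 * ((u - r * v) / (u * r ^ 2)) - 2 * (1 / 3)
        = 2 * (3 * (u - r * v) - r ^ 2 * u) / (3 * (u * r ^ 2)) := by
      field_simp
    rw [key]
    positivity
  · rw [hψ0]; norm_num
end

section
/- Let ψ(s) = (1 − s·cot s)/s² on (−π, π) with ψ(0) = 1/3. Then for all 0 < r < π: ψ''(r) > ψ'(r)/r > 0, and the limit of ψ'(r)/r as r → 0⁺ is positive. -/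
open Real Set Filter Finset Topology

noncomputable def AA (j : ℕ) : ℝ := ((j:ℝ)+1)^2 * Real.pi^2

lemma AA_ge (j : ℕ) : Real.pi^2 ≤ AA j := by
  have h1 : (1:ℝ) ≤ ((j:ℝ)+1)^2 := by nlinarith [Nat.cast_nonneg (α := ℝ) j]
  have h2 : (0:ℝ) ≤ Real.pi^2 := sq_nonneg _
  unfold AA; nlinarith

lemma AA_pos (j : ℕ) : 0 < AA j :=
  lt_of_lt_of_le (by positivity) (AA_ge j)

lemma summable_one_div_AA : Summable (fun j => 1 / AA j) := by
  have h : Summable (fun j : ℕ => 1 / ((j:ℝ)+1)^2) := by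
    have := (summable_nat_add_iff (f := fun n : ℕ => 1 / (n:ℝ)^2) 1).mpr
      (Real.summable_one_div_nat_pow.mpr one_lt_two)
    simpa using this
  have := h.mul_right (1/Real.pi^2)
  refine this.congr fun j => ?_
  have := Real.pi_ne_zero
  field_simp [AA]
  rfl

lemma delta_pos {b : ℝ} (hb0 : 0 ≤ b) (hb : b < Real.pi) : 0 < 1 - b^2/Real.pi^2 := by
  have hπ : 0 < Real.pi := Real.pi_pos
  have h : b^2 < Real.pi^2 := by nlinarith
  have : b^2/Real.pi^2 < 1 := (div_lt_one (by positivity)).mpr h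
  linarith

lemma denom_lb {b r : ℝ} (hb0 : 0 ≤ b) (hb : b < Real.pi) (hr : r^2 ≤ b^2) (j : ℕ) :
    (1 - b^2/Real.pi^2) * AA j ≤ AA j - r^2 := by
  have hπ : 0 < Real.pi := Real.pi_pos
  have hA := AA_ge j
  have hπ2 : (0:ℝ) < Real.pi^2 := by positivity
  have heq : (1 - b^2/Real.pi^2) * AA j = AA j - b^2 * (AA j / Real.pi^2) := by ring
  rw [heq]
  have h1 : (1:ℝ) ≤ AA j / Real.pi^2 := (one_le_div hπ2).mpr hA
  nlinarith [AA_pos j, sq_nonneg b]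

lemma denom_pos {b r : ℝ} (hb0 : 0 ≤ b) (hb : b < Real.pi) (hr : r^2 ≤ b^2) (j : ℕ) :
    0 < AA j - r^2 :=
  lt_of_lt_of_le (mul_pos (delta_pos hb0 hb) (AA_pos j)) (denom_lb hb0 hb hr j)

lemma summable_bound {δ : ℝ} (hδ : 0 < δ) (k : ℕ) (hk : 1 ≤ k) :
    Summable fun j => 1/(δ * AA j)^k := by
  have hπ2 : (1:ℝ) ≤ Real.pi^2 := by nlinarith [Real.pi_gt_three]
  refine Summable.of_nonneg_of_le (fun j => by have := AA_pos j; positivity)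
    (fun j => ?_) (summable_one_div_AA.mul_left (1/(δ^k * (Real.pi^2)^(k-1))))
  have hA := AA_pos j
  have hAg := AA_ge j
  have key : δ^k * (Real.pi^2)^(k-1) * AA j ≤ (δ * AA j)^k := by
    rw [mul_pow]
    have h1 : (Real.pi^2)^(k-1) * AA j ≤ (AA j)^k := by
      calc (Real.pi^2)^(k-1) * AA j ≤ (AA j)^(k-1) * AA j := by
            have := pow_le_pow_left₀ (by positivity) hAg (k-1)
            nlinarith [pow_nonneg (le_of_lt hA) (k-1)]
        _ = (AA j)^(k-1+1) := by ring
        _ = (AA j)^k := by rw [Nat.sub_add_cancel hk]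
    calc δ^k * (Real.pi^2)^(k-1) * AA j = δ^k * ((Real.pi^2)^(k-1) * AA j) := by ring
      _ ≤ δ^k * (AA j)^k := mul_le_mul_of_nonneg_left h1 (by positivity)
  have hpos : (0:ℝ) < δ^k * (Real.pi^2)^(k-1) * AA j := by positivity
  calc 1/(δ * AA j)^k ≤ 1/(δ^k * (Real.pi^2)^(k-1) * AA j) := by
        exact one_div_le_one_div_of_le hpos key
    _ = 1/(δ^k * (Real.pi^2)^(k-1)) * (1/AA j) := by
        rw [div_mul_div_comm, one_mul, mul_assoc]

lemma summable_log {r : ℝ} (h0 : 0 < r) (hπ : r < Real.pi) :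
    Summable (fun j => Real.log (1 - r^2 / AA j)) := by
  set δ := 1 - r^2/Real.pi^2 with hδdef
  have hδ : 0 < δ := delta_pos h0.le hπ
  refine Summable.of_norm_bounded (g := fun j => r^2 * (1/(δ * AA j)^1))
    (((summable_bound hδ 1 le_rfl).mul_left (r^2))) (fun j => ?_)
  have hd : 0 < AA j - r^2 := denom_pos h0.le hπ le_rfl j
  have hA := AA_pos j
  have ht : 0 < 1 - r^2/AA j := by
    have : 1 - r^2/AA j = (AA j - r^2)/AA j := by field_simp
    rw [this]; positivity
  have hle : Real.log (1 - r^2/AA j) ≤ 0 := by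
    apply Real.log_nonpos ht.le
    have : 0 ≤ r^2/AA j := div_nonneg (sq_nonneg r) hA.le
    linarith
  rw [Real.norm_eq_abs, abs_of_nonpos hle, ← Real.log_inv]
  have hkey : Real.log (1 - r^2/AA j)⁻¹ ≤ (1 - r^2/AA j)⁻¹ - 1 :=
    Real.log_le_sub_one_of_pos (by positivity)
  have heq : (1 - r^2/AA j)⁻¹ - 1 = r^2 / (AA j - r^2) := by
    field_simp
    ring
  refine hkey.trans (heq.le.trans ?_)
  have hlb := denom_lb h0.le hπ le_rfl j
  show r^2/(AA j - r^2) ≤ r^2 * (1/(δ * AA j)^1)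
  rw [pow_one, mul_one_div]
  exact div_le_div_of_nonneg_left (sq_nonneg r) (by positivity) hlb

lemma tsum_log_eq {r : ℝ} (h0 : 0 < r) (hπ : r < Real.pi) :
    ∑' j, Real.log (1 - r^2 / AA j) = Real.log (Real.sin r) - Real.log r := by
  have hA := AA_pos
  have hd : ∀ j, 0 < AA j - r^2 := fun j => denom_pos h0.le hπ le_rfl j
  have ht : ∀ j : ℕ, 0 < 1 - r^2/AA j := fun j => by
    have hAj := AA_pos j
    have h2 : 1 - r^2/AA j = (AA j - r^2)/AA j := by field_simp
    rw [h2]; exact div_pos (hd j) hAj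
  have hπ0 := Real.pi_ne_zero
  have E := Real.tendsto_euler_sin_prod (r / Real.pi)
  have E2 : Tendsto (fun n : ℕ => r * ∏ j ∈ Finset.range n, (1 - r^2/AA j))
      atTop (𝓝 (Real.sin r)) := by
    convert E using 1
    · funext n
      rw [mul_div_cancel₀ _ hπ0]
      congr 1
      refine Finset.prod_congr rfl (fun j _ => ?_)
      rw [div_pow, div_div, AA, mul_comm]
    · rw [mul_div_cancel₀ _ hπ0]
  have hsin : 0 < Real.sin r := Real.sin_pos_of_pos_of_lt_pi h0 hπ
  have E3 : Tendsto (fun n : ℕ => Real.log (r * ∏ j ∈ Finset.range n, (1 - r^2/AA j)))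
      atTop (𝓝 (Real.log (Real.sin r))) :=
    ((Real.continuousAt_log hsin.ne').tendsto).comp E2
  have E4 : Tendsto (fun n : ℕ => ∑ j ∈ Finset.range n, Real.log (1 - r^2/AA j))
      atTop (𝓝 (Real.log (Real.sin r) - Real.log r)) := by
    have heq : ∀ n : ℕ, ∑ j ∈ Finset.range n, Real.log (1 - r^2/AA j)
        = Real.log (r * ∏ j ∈ Finset.range n, (1 - r^2/AA j)) - Real.log r := by
      intro n
      rw [Real.log_mul h0.ne' (Finset.prod_pos (fun j _ => ht j)).ne', Real.log_prod]
      · ring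
      · exact fun j _ => (ht j).ne'
    simp_rw [heq]
    exact E3.sub_const _
  exact tendsto_nhds_unique ((summable_log h0 hπ).hasSum.tendsto_sum_nat) E4

-- membership in Ioo (-b) b gives square bound
lemma sq_le_of_mem {b x : ℝ} (hx : x ∈ Ioo (-b) b) : x^2 ≤ b^2 := by
  rcases hx with ⟨h1, h2⟩
  nlinarith

lemma hasDerivAt_logterm {b : ℝ} (hb0 : 0 ≤ b) (hb : b < Real.pi) (j : ℕ)
    {x : ℝ} (hx : x ∈ Ioo (-b) b) :
    HasDerivAt (fun y => Real.log (1 - y^2 / AA j)) (-2*x/(AA j - x^2)) x := by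
  have hA := AA_pos j
  have hd : 0 < AA j - x^2 := denom_pos hb0 hb (sq_le_of_mem hx) j
  have ht : 0 < 1 - x^2/AA j := by
    have h2 : 1 - x^2/AA j = (AA j - x^2)/AA j := by field_simp
    rw [h2]; positivity
  have h1 : HasDerivAt (fun y : ℝ => 1 - y^2 / AA j) (-(2*x/AA j)) x := by
    simpa using ((hasDerivAt_pow 2 x).div_const (AA j)).const_sub 1
  have := h1.log ht.ne'
  convert this using 1
  field_simp

lemma cot_pf {r : ℝ} (h0 : 0 < r) (hπ : r < Real.pi) :
    Real.cot r - 1/r = ∑' j, (-2*r/(AA j - r^2)) := by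
  set b := (r + Real.pi)/2 with hbdef
  have hπ0 := Real.pi_pos
  have hb0 : 0 ≤ b := by positivity
  have hbπ : b < Real.pi := by simp only [hbdef]; linarith
  have hrb : r < b := by simp only [hbdef]; linarith
  have hrU : r ∈ Ioo (-b) b := ⟨by linarith, hrb⟩
  set δ := 1 - b^2/Real.pi^2 with hδdef
  have hδ : 0 < δ := delta_pos hb0 hbπ
  -- derivative of the log-sum
  have hG : HasDerivAt (fun y => ∑' j, Real.log (1 - y^2 / AA j))
      (∑' j, -2*r/(AA j - r^2)) r := by
    refine hasDerivAt_tsum_of_isPreconnected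
      (u := fun j => 2*b * (1/(δ * AA j)^1))
      ((summable_bound hδ 1 le_rfl).mul_left _) (isOpen_Ioo (a := -b) (b := b))
      (isPreconnected_Ioo) (fun j y hy => hasDerivAt_logterm hb0 hbπ j hy)
      (fun j y hy => ?_) hrU (summable_log h0 hπ) hrU
    have hd : 0 < AA j - y^2 := denom_pos hb0 hbπ (sq_le_of_mem hy) j
    have hlb := denom_lb hb0 hbπ (sq_le_of_mem hy) j
    have hy' : |y| ≤ b := by
      rw [abs_le]; exact ⟨hy.1.le, hy.2.le⟩
    show |(-2)*y / (AA j - y^2)| ≤ 2*b * (1/(δ * AA j)^1)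
    rw [abs_div, abs_of_pos hd, pow_one, mul_one_div]
    apply div_le_div₀ (by linarith) ?_ (mul_pos hδ (AA_pos j)) hlb
    rw [abs_mul]
    calc |(-2:ℝ)| * |y| = 2 * |y| := by norm_num
      _ ≤ 2 * b := by linarith
  have hsin : 0 < Real.sin r := Real.sin_pos_of_pos_of_lt_pi h0 hπ
  have hF : HasDerivAt (fun y => Real.log (Real.sin y) - Real.log y)
      (Real.cos r / Real.sin r - r⁻¹) r :=
    ((Real.hasDerivAt_sin r).log hsin.ne').sub (Real.hasDerivAt_log h0.ne')
  have hEq : (fun y => Real.log (Real.sin y) - Real.log y)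
      =ᶠ[𝓝 r] (fun y => ∑' j, Real.log (1 - y^2 / AA j)) := by
    filter_upwards [Ioo_mem_nhds h0 hrb] with y hy
    exact (tsum_log_eq hy.1 (lt_trans hy.2 hbπ)).symm
  have hkey := hF.unique (hG.congr_of_eventuallyEq hEq)
  rw [Real.cot_eq_cos_div_sin, ← hkey, one_div]

lemma summable_inv_denom {b r : ℝ} (hb0 : 0 ≤ b) (hb : b < Real.pi) (hr : r^2 ≤ b^2)
    (k : ℕ) (hk : 1 ≤ k) : Summable fun j => 1/(AA j - r^2)^k := by
  have hδ : 0 < 1 - b^2/Real.pi^2 := delta_pos hb0 hb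
  refine Summable.of_nonneg_of_le
    (fun j => by have := denom_pos hb0 hb hr j; positivity)
    (fun j => ?_) (summable_bound hδ k hk)
  have hd := denom_pos hb0 hb hr j
  have hlb := denom_lb hb0 hb hr j
  have hδA : 0 < (1 - b^2/Real.pi^2) * AA j := mul_pos hδ (AA_pos j)
  exact one_div_le_one_div_of_le (pow_pos hδA k) (pow_le_pow_left₀ hδA.le hlb k)

lemma hasDerivAt_gterm {b : ℝ} (hb0 : 0 ≤ b) (hb : b < Real.pi) (j : ℕ)
    {x : ℝ} (hx : x ∈ Ioo (-b) b) :
    HasDerivAt (fun y => 2/(AA j - y^2)) (4*x/(AA j - x^2)^2) x := by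
  have hd : 0 < AA j - x^2 := denom_pos hb0 hb (sq_le_of_mem hx) j
  have inner : HasDerivAt (fun y : ℝ => AA j - y^2) (-(2*x)) x := by
    simpa using (hasDerivAt_pow 2 x).const_sub (AA j)
  have h2 := (inner.inv hd.ne').const_mul (2:ℝ)
  convert h2 using 1
  case e'_4 => rfl
  case e'_5 => rfl
  case e'_8 => funext y; simp [div_eq_mul_inv]
  case e'_9 => ring

lemma hasDerivAt_g1term {b : ℝ} (hb0 : 0 ≤ b) (hb : b < Real.pi) (j : ℕ)
    {x : ℝ} (hx : x ∈ Ioo (-b) b) :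
    HasDerivAt (fun y => 4*y/(AA j - y^2)^2)
      ((4*AA j + 12*x^2)/(AA j - x^2)^3) x := by
  have hd : 0 < AA j - x^2 := denom_pos hb0 hb (sq_le_of_mem hx) j
  have inner : HasDerivAt (fun y : ℝ => AA j - y^2) (-(2*x)) x := by
    simpa using (hasDerivAt_pow 2 x).const_sub (AA j)
  have hsq : HasDerivAt (fun y : ℝ => (AA j - y^2)^2)
      ((2:ℕ) * (AA j - x^2)^1 * (-(2*x))) x := inner.pow 2
  have hu : HasDerivAt (fun y : ℝ => 4*y) 4 x := by
    simpa using (hasDerivAt_id x).const_mul (4:ℝ)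
  have h2 := hu.mul (hsq.inv (pow_ne_zero 2 hd.ne'))
  convert h2 using 1
  case e'_4 => rfl
  case e'_5 => rfl
  case e'_8 => funext y; simp [div_eq_mul_inv]
  case e'_9 => simp only [Pi.inv_apply]; field_simp; ring

lemma hasDerivAt_g {r : ℝ} (hr : |r| < Real.pi) :
    HasDerivAt (fun x => ∑' j, 2/(AA j - x^2)) (∑' j, 4*r/(AA j - r^2)^2) r := by
  set b := (|r| + Real.pi)/2 with hbdef
  have hπ0 := Real.pi_pos
  have habs := abs_nonneg r
  have hb0 : 0 ≤ b := by positivity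
  have hbπ : b < Real.pi := by simp only [hbdef]; linarith
  have hrb : |r| < b := by simp only [hbdef]; linarith
  have hrU : r ∈ Ioo (-b) b := by
    have := abs_lt.mp hrb; exact ⟨this.1, this.2⟩
  set δ := 1 - b^2/Real.pi^2 with hδdef
  have hδ : 0 < δ := delta_pos hb0 hbπ
  refine hasDerivAt_tsum_of_isPreconnected
    (u := fun j => 4*b * (1/(δ * AA j)^2))
    ((summable_bound hδ 2 one_le_two).mul_left _) (isOpen_Ioo (a := -b) (b := b))
    isPreconnected_Ioo (fun j y hy => hasDerivAt_gterm hb0 hbπ j hy)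
    (fun j y hy => ?_) hrU ?_ hrU
  · have hd : 0 < AA j - y^2 := denom_pos hb0 hbπ (sq_le_of_mem hy) j
    have hlb := denom_lb hb0 hbπ (sq_le_of_mem hy) j
    have hδA : 0 < δ * AA j := mul_pos hδ (AA_pos j)
    have hy' : |y| ≤ b := by rw [abs_le]; exact ⟨hy.1.le, hy.2.le⟩
    show |4*y/(AA j - y^2)^2| ≤ 4*b * (1/(δ * AA j)^2)
    rw [abs_div, abs_of_pos (pow_pos hd 2), mul_one_div]
    apply div_le_div₀ (by linarith) ?_ (pow_pos hδA 2)
      (pow_le_pow_left₀ hδA.le hlb 2)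
    rw [abs_mul]
    calc |(4:ℝ)| * |y| = 4 * |y| := by norm_num
      _ ≤ 4 * b := by linarith
  · have hsb : r^2 ≤ b^2 := by nlinarith [sq_abs r, abs_nonneg r]
    refine ((summable_inv_denom hb0 hbπ hsb 1 le_rfl).mul_left 2).congr fun j => ?_
    rw [pow_one, mul_one_div]

lemma hasDerivAt_g1 {r : ℝ} (hr : |r| < Real.pi) :
    HasDerivAt (fun x => ∑' j, 4*x/(AA j - x^2)^2)
      (∑' j, (4*AA j + 12*r^2)/(AA j - r^2)^3) r := by
  set b := (|r| + Real.pi)/2 with hbdef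
  have hπ0 := Real.pi_pos
  have habs := abs_nonneg r
  have hb0 : 0 ≤ b := by positivity
  have hbπ : b < Real.pi := by simp only [hbdef]; linarith
  have hrb : |r| < b := by simp only [hbdef]; linarith
  have hrU : r ∈ Ioo (-b) b := by
    have := abs_lt.mp hrb; exact ⟨this.1, this.2⟩
  set δ := 1 - b^2/Real.pi^2 with hδdef
  have hδ : 0 < δ := delta_pos hb0 hbπ
  refine hasDerivAt_tsum_of_isPreconnected
    (u := fun j => (16/δ) * (1/(δ * AA j)^2))
    ((summable_bound hδ 2 one_le_two).mul_left _) (isOpen_Ioo (a := -b) (b := b))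
    isPreconnected_Ioo (fun j y hy => hasDerivAt_g1term hb0 hbπ j hy)
    (fun j y hy => ?_) (⟨by linarith, by linarith⟩ : (0:ℝ) ∈ Ioo (-b) b) ?_ hrU
  · have hA := AA_pos j
    have hAg := AA_ge j
    have hd : 0 < AA j - y^2 := denom_pos hb0 hbπ (sq_le_of_mem hy) j
    have hlb := denom_lb hb0 hbπ (sq_le_of_mem hy) j
    have hδA : 0 < δ * AA j := mul_pos hδ hA
    have hy2 : y^2 ≤ AA j := by
      have h1 : y^2 ≤ b^2 := sq_le_of_mem hy
      nlinarith
    show |(4*AA j + 12*y^2)/(AA j - y^2)^3| ≤ (16/δ) * (1/(δ * AA j)^2)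
    have hnum : 0 ≤ 4*AA j + 12*y^2 := by nlinarith [sq_nonneg y]
    rw [abs_div, abs_of_nonneg hnum, abs_of_pos (pow_pos hd 3)]
    have key : (4*AA j + 12*y^2)/(AA j - y^2)^3 ≤ (16*AA j)/(δ * AA j)^3 := by
      apply div_le_div₀ (by positivity) (by nlinarith) (pow_pos hδA 3)
        (pow_le_pow_left₀ hδA.le hlb 3)
    refine key.trans (le_of_eq ?_)
    field_simp
  · simpa using (summable_zero : Summable (fun _ : ℕ => (0:ℝ)))

theorem statement3
    (ψ : ℝ → ℝ)
    (hψ : ∀ s, ψ s = if s = 0 then 1/3 else (1 - s * Real.cot s) / s ^ 2) :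
    (∀ r : ℝ, 0 < r → r < Real.pi →
      deriv (deriv ψ) r > deriv ψ r / r ∧ deriv ψ r / r > 0) ∧
    ∃ L : ℝ, 0 < L ∧
      Filter.Tendsto (fun r => deriv ψ r / r) (nhdsWithin 0 (Set.Ioi 0)) (nhds L) := by
  have hπ0 := Real.pi_pos
  have h1π : (1:ℝ) < Real.pi := by nlinarith [Real.pi_gt_three]
  have hψg : ∀ x ∈ Ioo (0:ℝ) Real.pi, ψ x = ∑' j, 2/(AA j - x^2) := by
    intro x hx
    obtain ⟨h0, hπ⟩ := hx
    have hx2 : (x:ℝ)^2 ≠ 0 := pow_ne_zero 2 h0.ne'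
    rw [hψ x, if_neg h0.ne']
    have hc := cot_pf h0 hπ
    have h1 : 1 - x * Real.cot x = x^2 * ∑' j, 2/(AA j - x^2) := by
      have hcot : Real.cot x = 1/x + ∑' j, (-2*x/(AA j - x^2)) := by linarith
      rw [hcot, mul_add, mul_one_div, div_self h0.ne', ← tsum_mul_left]
      have h2 : ∀ j : ℕ, x * (-2*x/(AA j - x^2)) = -(x^2 * (2/(AA j - x^2))) :=
        fun j => by ring
      rw [tsum_congr h2, tsum_neg, tsum_mul_left]
      ring
    rw [h1, mul_div_cancel_left₀ _ hx2]
  have habs : ∀ x ∈ Ioo (0:ℝ) Real.pi, |x| < Real.pi := by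
    intro x hx
    rw [abs_lt]
    exact ⟨by linarith [hx.1], hx.2⟩
  have hd1 : ∀ x ∈ Ioo (0:ℝ) Real.pi, deriv ψ x = ∑' j, 4*x/(AA j - x^2)^2 := by
    intro x hx
    refine ((hasDerivAt_g (habs x hx)).congr_of_eventuallyEq ?_).deriv
    filter_upwards [Ioo_mem_nhds hx.1 hx.2] with y hy
    exact hψg y hy
  have hd2 : ∀ x ∈ Ioo (0:ℝ) Real.pi,
      deriv (deriv ψ) x = ∑' j, (4*AA j + 12*x^2)/(AA j - x^2)^3 := by
    intro x hx
    refine ((hasDerivAt_g1 (habs x hx)).congr_of_eventuallyEq ?_).deriv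
    filter_upwards [Ioo_mem_nhds hx.1 hx.2] with y hy
    exact hd1 y hy
  have hratio : ∀ x ∈ Ioo (0:ℝ) Real.pi, deriv ψ x / x = ∑' j, 4/(AA j - x^2)^2 := by
    intro x hx
    rw [hd1 x hx]
    have h2 : ∀ j : ℕ, 4*x/(AA j - x^2)^2 = x * (4/(AA j - x^2)^2) := fun j => by ring
    rw [tsum_congr h2, tsum_mul_left, mul_div_cancel_left₀ _ hx.1.ne']
  constructor
  · intro r h0 hπ
    have hrI : r ∈ Ioo (0:ℝ) Real.pi := ⟨h0, hπ⟩
    have hdp : ∀ j : ℕ, 0 < AA j - r^2 := fun j => denom_pos h0.le hπ le_rfl j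
    have hS2 : Summable fun j => 4/(AA j - r^2)^2 :=
      ((summable_inv_denom h0.le hπ le_rfl 2 one_le_two).mul_left 4).congr fun j => by
        rw [mul_one_div]
    have hS3 : Summable fun j => 16*r^2/(AA j - r^2)^3 :=
      ((summable_inv_denom h0.le hπ le_rfl 3 (by norm_num)).mul_left (16*r^2)).congr
        fun j => by rw [mul_one_div]
    have hpos2 : deriv ψ r / r > 0 := by
      rw [hratio r hrI]
      exact Summable.tsum_pos hS2 (fun j => by have := hdp j; positivity) 0
        (by have := hdp 0; positivity)
    refine ⟨?_, hpos2⟩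
    rw [hd2 r hrI, hratio r hrI]
    have hsplit : ∀ j : ℕ, (4*AA j + 12*r^2)/(AA j - r^2)^3
        = 4/(AA j - r^2)^2 + 16*r^2/(AA j - r^2)^3 := by
      intro j
      have hd := hdp j
      field_simp
      ring
    rw [tsum_congr hsplit, Summable.tsum_add hS2 hS3]
    have hpos3 : 0 < ∑' j, 16*r^2/(AA j - r^2)^3 :=
      Summable.tsum_pos hS3 (fun j => by have := hdp j; positivity) 0
        (by have := hdp 0; positivity)
    linarith
  · refine ⟨∑' j, 4/(AA j - (0:ℝ)^2)^2, ?_, ?_⟩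
    · have hS : Summable fun j => 4/(AA j - (0:ℝ)^2)^2 :=
        ((summable_inv_denom le_rfl hπ0 le_rfl 2 one_le_two).mul_left 4).congr fun j => by
          rw [mul_one_div]
      exact Summable.tsum_pos hS
        (fun j => by have := denom_pos (le_refl (0:ℝ)) hπ0 le_rfl j; positivity) 0
        (by have := denom_pos (le_refl (0:ℝ)) hπ0 le_rfl 0; positivity)
    · have hδ : 0 < 1 - (1:ℝ)^2/Real.pi^2 := delta_pos zero_le_one h1π
      have hcont : ContinuousOn (fun x => ∑' j, 4/(AA j - x^2)^2) (Ioo (-1:ℝ) 1) := by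
        refine continuousOn_tsum (fun j => ?_)
          ((summable_bound hδ 2 one_le_two).mul_left 4) (fun j x hx => ?_)
        · refine ContinuousOn.div continuousOn_const
            ((continuous_const.sub (continuous_pow 2)).pow 2).continuousOn
            (fun x hx => ?_)
          exact (pow_pos (denom_pos zero_le_one h1π (by simpa using sq_le_of_mem hx) j) 2).ne'
        · have hd := denom_pos zero_le_one h1π (by simpa using sq_le_of_mem hx) j
          have hlb := denom_lb zero_le_one h1π (by simpa using sq_le_of_mem hx) j
          have hδA : 0 < (1 - (1:ℝ)^2/Real.pi^2) * AA j := mul_pos hδ (AA_pos j)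
          rw [Real.norm_eq_abs, abs_div, abs_of_pos (pow_pos hd 2), abs_of_nonneg
            (by norm_num : (0:ℝ) ≤ 4), mul_one_div]
          exact div_le_div₀ (by norm_num) le_rfl (pow_pos hδA 2)
            (pow_le_pow_left₀ hδA.le hlb 2)
      have hc0 : ContinuousAt (fun x => ∑' j, 4/(AA j - x^2)^2) 0 :=
        hcont.continuousAt (Ioo_mem_nhds (by norm_num) (by norm_num))
      have hT := hc0.tendsto.mono_left (nhdsWithin_le_nhds (s := Ioi (0:ℝ)))
      refine Filter.Tendsto.congr' ?_ hT
      filter_upwards [Ioo_mem_nhdsGT_of_mem (Set.left_mem_Ico.mpr zero_lt_one)] with y hy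
      exact (hratio y ⟨hy.1, lt_trans hy.2 h1π⟩).symm
end

section
/- Let ψ(s) = (1 − s·cot s)/s² with ψ(0) = 1/3. Then for all 0 ≤ r < π: ψ(r) > sqrt(ψ'(r)/r), where at r = 0 the quantity ψ'(r)/r is interpreted as its limit lim_{r→0⁺} ψ'(r)/r. -/
open Real Set Filter

/-- Generic helper: nonneg derivative on `(0,∞)` and `f 0 = 0` gives `f ≥ 0` on `[0,∞)`. -/
lemma mono_aux {f f' : ℝ → ℝ} (hd : ∀ x, HasDerivAt f (f' x) x)
    (h' : ∀ x, 0 < x → 0 ≤ f' x) (h0 : f 0 = 0) : ∀ x, 0 ≤ x → 0 ≤ f x := by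
  intro x hx
  have hmono : MonotoneOn f (Ici (0:ℝ)) := by
    apply monotoneOn_of_hasDerivWithinAt_nonneg (convex_Ici 0)
      (fun y _ => (hd y).continuousAt.continuousWithinAt)
      (fun y hy => (hd y).hasDerivWithinAt)
    intro y hy
    rw [interior_Ici] at hy
    exact h' y hy
  have := hmono self_mem_Ici hx hx
  simpa [h0] using this

lemma cos_lb0 : ∀ x : ℝ, 0 ≤ x → 1 - x^2/2 ≤ Real.cos x := by
  have := mono_aux (f := fun x => Real.cos x - (1 - x^2/2)) (f' := fun x => x - Real.sin x)
    (fun x => by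
      have h := (Real.hasDerivAt_cos x).sub
        ((hasDerivAt_const x (1:ℝ)).sub (((hasDerivAt_pow 2 x)).div_const 2))
      exact h.congr_deriv (by push_cast [id_eq]; ring))
    (fun x hx => by have := Real.sin_le hx.le; show (0:ℝ) ≤ x - Real.sin x; linarith) (by norm_num)
  intro x hx; linarith [this x hx]

lemma sin_lb0 : ∀ x : ℝ, 0 ≤ x → x - x^3/6 ≤ Real.sin x := by
  have := mono_aux (f := fun x => Real.sin x - (x - x^3/6))
    (f' := fun x => Real.cos x - (1 - x^2/2))
    (fun x => by
      have h := (Real.hasDerivAt_sin x).sub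
        ((hasDerivAt_id x).sub (((hasDerivAt_pow 3 x)).div_const 6))
      exact h.congr_deriv (by push_cast [id_eq]; ring))
    (fun x hx => by have := cos_lb0 x hx.le; show (0:ℝ) ≤ Real.cos x - (1 - x^2/2); linarith) (by norm_num)
  intro x hx; linarith [this x hx]

lemma cos_ub : ∀ x : ℝ, 0 ≤ x → Real.cos x ≤ 1 - x^2/2 + x^4/24 := by
  have := mono_aux (f := fun x => (1 - x^2/2 + x^4/24) - Real.cos x)
    (f' := fun x => Real.sin x - (x - x^3/6))
    (fun x => by
      have h := ((((hasDerivAt_const x (1:ℝ)).sub ((hasDerivAt_pow 2 x).div_const 2)).add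
        ((hasDerivAt_pow 4 x).div_const 24)).sub (Real.hasDerivAt_cos x))
      exact h.congr_deriv (by push_cast [id_eq]; ring))
    (fun x hx => by have := sin_lb0 x hx.le; show (0:ℝ) ≤ Real.sin x - (x - x^3/6); linarith) (by norm_num)
  intro x hx; linarith [this x hx]

lemma sin_ub : ∀ x : ℝ, 0 ≤ x → Real.sin x ≤ x - x^3/6 + x^5/120 := by
  have := mono_aux (f := fun x => (x - x^3/6 + x^5/120) - Real.sin x)
    (f' := fun x => (1 - x^2/2 + x^4/24) - Real.cos x)
    (fun x => by
      have h := ((((hasDerivAt_id x).sub ((hasDerivAt_pow 3 x).div_const 6)).add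
        ((hasDerivAt_pow 5 x).div_const 120)).sub (Real.hasDerivAt_sin x))
      exact h.congr_deriv (by push_cast [id_eq]; ring))
    (fun x hx => by have := cos_ub x hx.le; show (0:ℝ) ≤ (1 - x^2/2 + x^4/24) - Real.cos x; linarith) (by norm_num)
  intro x hx; linarith [this x hx]

lemma cos_lb : ∀ x : ℝ, 0 ≤ x → 1 - x^2/2 + x^4/24 - x^6/720 ≤ Real.cos x := by
  have := mono_aux (f := fun x => Real.cos x - (1 - x^2/2 + x^4/24 - x^6/720))
    (f' := fun x => (x - x^3/6 + x^5/120) - Real.sin x)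
    (fun x => by
      have h := (Real.hasDerivAt_cos x).sub
        ((((hasDerivAt_const x (1:ℝ)).sub ((hasDerivAt_pow 2 x).div_const 2)).add
          ((hasDerivAt_pow 4 x).div_const 24)).sub ((hasDerivAt_pow 6 x).div_const 720))
      exact h.congr_deriv (by push_cast [id_eq]; ring))
    (fun x hx => by have := sin_ub x hx.le; show (0:ℝ) ≤ (x - x^3/6 + x^5/120) - Real.sin x; linarith) (by norm_num)
  intro x hx; linarith [this x hx]

lemma sin_lb : ∀ x : ℝ, 0 ≤ x → x - x^3/6 + x^5/120 - x^7/5040 ≤ Real.sin x := by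
  have := mono_aux (f := fun x => Real.sin x - (x - x^3/6 + x^5/120 - x^7/5040))
    (f' := fun x => Real.cos x - (1 - x^2/2 + x^4/24 - x^6/720))
    (fun x => by
      have h := (Real.hasDerivAt_sin x).sub
        ((((hasDerivAt_id x).sub ((hasDerivAt_pow 3 x).div_const 6)).add
          ((hasDerivAt_pow 5 x).div_const 120)).sub ((hasDerivAt_pow 7 x).div_const 5040))
      exact h.congr_deriv (by push_cast [id_eq]; ring))
    (fun x hx => by have := cos_lb x hx.le; show (0:ℝ) ≤ Real.cos x - (1 - x^2/2 + x^4/24 - x^6/720); linarith) (by norm_num)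
  intro x hx; linarith [this x hx]

/-- `sin r - r cos r > 0` on `(0, π)`. -/
lemma sin_sub_cos_pos {r : ℝ} (h0 : 0 < r) (hπ : r < Real.pi) :
    0 < Real.sin r - r * Real.cos r := by
  have hmono : StrictMonoOn (fun x => Real.sin x - x * Real.cos x) (Icc 0 Real.pi) := by
    apply strictMonoOn_of_hasDerivWithinAt_pos (convex_Icc 0 Real.pi)
      (by fun_prop) (f' := fun x => x * Real.sin x)
    · intro x hx
      have h := (Real.hasDerivAt_sin x).sub ((hasDerivAt_id x).mul (Real.hasDerivAt_cos x))
      refine (HasDerivAt.hasDerivWithinAt ?_)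
      convert h using 1; · rfl
      simp only [id_eq]; ring
    · intro x hx
      rw [interior_Icc] at hx
      exact mul_pos hx.1 (Real.sin_pos_of_pos_of_lt_pi hx.1 hx.2)
  have := hmono (left_mem_Icc.2 Real.pi_pos.le) ⟨h0.le, hπ.le⟩ h0
  simpa using this

/-- Key: `3 sin r - 3 r cos r - r² sin r > 0` on `(0, π)`. -/
lemma key_pos {r : ℝ} (h0 : 0 < r) (hπ : r < Real.pi) :
    0 < 3 * Real.sin r - 3 * r * Real.cos r - r^2 * Real.sin r := by
  have hmono : StrictMonoOn (fun x => 3 * Real.sin x - 3 * x * Real.cos x - x^2 * Real.sin x)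
      (Icc 0 Real.pi) := by
    apply strictMonoOn_of_hasDerivWithinAt_pos (convex_Icc 0 Real.pi)
      (by fun_prop) (f' := fun x => x * (Real.sin x - x * Real.cos x))
    · intro x hx
      have h := (((Real.hasDerivAt_sin x).const_mul 3).sub
        (((hasDerivAt_id x).const_mul 3).mul (Real.hasDerivAt_cos x))).sub
        ((hasDerivAt_pow 2 x).mul (Real.hasDerivAt_sin x))
      refine (HasDerivAt.hasDerivWithinAt ?_)
      convert h using 1; · rfl
      push_cast [id_eq]; ring
    · intro x hx
      rw [interior_Icc] at hx
      exact mul_pos hx.1 (sin_sub_cos_pos hx.1 hx.2)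
  have := hmono (left_mem_Icc.2 Real.pi_pos.le) ⟨h0.le, hπ.le⟩ h0
  simpa using this

/-- Derivative of ψ away from 0. -/
lemma psi_deriv (ψ : ℝ → ℝ)
    (hψ : ∀ s, ψ s = if s = 0 then 1/3 else (1 - s * Real.cot s) / s ^ 2)
    {r : ℝ} (hr : r ≠ 0) (hs : Real.sin r ≠ 0) :
    deriv ψ r = (-(Real.cos r / Real.sin r
      + r * ((-(Real.sin r * Real.sin r) - Real.cos r * Real.cos r) / Real.sin r ^ 2)) * r ^ 2
      - (1 - r * (Real.cos r / Real.sin r)) * (2 * r)) / (r ^ 2) ^ 2 := by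
  have heq : ψ =ᶠ[nhds r] fun s => (1 - s * (Real.cos s / Real.sin s)) / s ^ 2 := by
    filter_upwards [compl_singleton_mem_nhds hr] with s hs0
    rw [hψ s, if_neg (by simpa using hs0), Real.cot_eq_cos_div_sin]
  rw [heq.deriv_eq]
  have hq : HasDerivAt (fun s => Real.cos s / Real.sin s)
      ((-Real.sin r * Real.sin r - Real.cos r * Real.cos r) / Real.sin r ^ 2) r :=
    (Real.hasDerivAt_cos r).div (Real.hasDerivAt_sin r) hs
  have hnum : HasDerivAt (fun s => 1 - s * (Real.cos s / Real.sin s))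
      (-(1 * (Real.cos r / Real.sin r) +
        r * ((-Real.sin r * Real.sin r - Real.cos r * Real.cos r) / Real.sin r ^ 2))) r :=
    ((hasDerivAt_id r).mul hq).const_sub 1
  have hden : HasDerivAt (fun s : ℝ => s ^ 2) ((2:ℕ) * r ^ 1) r := hasDerivAt_pow 2 r
  have h : HasDerivAt (fun s => (1 - s * (Real.cos s / Real.sin s)) / s ^ 2) _ r := hnum.div hden (pow_ne_zero 2 hr)
  rw [h.deriv]
  push_cast
  ring

theorem statement5
    (ψ : ℝ → ℝ)
    (hψ : ∀ s, ψ s = if s = 0 then 1/3 else (1 - s * Real.cot s) / s ^ 2) :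
    (∀ r : ℝ, 0 < r → r < Real.pi → ψ r > Real.sqrt (deriv ψ r / r)) ∧
    (∀ L : ℝ,
      Filter.Tendsto (fun r => deriv ψ r / r) (nhdsWithin 0 (Set.Ioi 0)) (nhds L) →
      ψ 0 > Real.sqrt L) := by
  have hψval : ∀ r : ℝ, r ≠ 0 → ψ r = (1 - r * (Real.cos r / Real.sin r)) / r ^ 2 := by
    intro r hr
    rw [hψ r, if_neg hr, Real.cot_eq_cos_div_sin]
  have hiden : ∀ r : ℝ, 0 < r → Real.sin r ≠ 0 → deriv ψ r / r = (ψ r)^2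
      - (3 * Real.sin r - 3 * r * Real.cos r - r^2 * Real.sin r) / (r^4 * Real.sin r) := by
    intro r h0 hs
    rw [psi_deriv ψ hψ h0.ne' hs, hψval r h0.ne']
    have hsc : Real.sin r ^ 2 + Real.cos r ^ 2 = 1 := Real.sin_sq_add_cos_sq r
    field_simp
    nlinarith [hsc, sq_nonneg (r * Real.sin r), sq_nonneg r, sq_nonneg (Real.sin r)]
  have hψpos : ∀ r : ℝ, 0 < r → r < Real.pi → 0 < ψ r := by
    intro r h0 hπ
    have hs : 0 < Real.sin r := Real.sin_pos_of_pos_of_lt_pi h0 hπ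
    have hK := key_pos h0 hπ
    rw [hψval r h0.ne']
    apply div_pos _ (by positivity)
    rw [sub_pos, show r * (Real.cos r / Real.sin r) = (r * Real.cos r) / Real.sin r by ring,
      div_lt_one hs]
    nlinarith
  constructor
  · intro r h0 hπ
    have hs : 0 < Real.sin r := Real.sin_pos_of_pos_of_lt_pi h0 hπ
    have hK := key_pos h0 hπ
    have hlt : deriv ψ r / r < (ψ r)^2 := by
      rw [hiden r h0 hs.ne']
      have : 0 < (3 * Real.sin r - 3 * r * Real.cos r - r^2 * Real.sin r) / (r^4 * Real.sin r) :=
        div_pos hK (by positivity)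
      linarith
    exact (Real.sqrt_lt' (hψpos r h0 hπ)).2 hlt
  · intro L hL
    have hπ1 : (1:ℝ) < Real.pi := by linarith [Real.pi_gt_three]
    have hbound : ∀ r : ℝ, 0 < r → r < 1 → deriv ψ r / r ≤ 349/3600 := by
      intro r h0 h1
      have hrπ : r < Real.pi := h1.trans hπ1
      have hs : 0 < Real.sin r := Real.sin_pos_of_pos_of_lt_pi h0 hrπ
      have hr2 : r^2 < 1 := pow_lt_one₀ h0.le h1 (by norm_num)
      -- lower bound on the key quantity: 3s - 3rc - r²s ≥ r⁴ s / 20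
      have hKlb : r^4 * Real.sin r / 20 ≤
          3 * Real.sin r - 3 * r * Real.cos r - r^2 * Real.sin r := by
        have hsl := sin_lb r h0.le
        have hsu := sin_ub r h0.le
        have hcu := cos_ub r h0.le
        nlinarith [mul_le_mul_of_nonneg_left hcu (by positivity : (0:ℝ) ≤ 3*r),
          mul_le_mul_of_nonneg_left hsu (by positivity : (0:ℝ) ≤ r^2),
          mul_le_mul_of_nonneg_left (Real.sin_le h0.le) (by positivity : (0:ℝ) ≤ r^4/20),
          hsl, mul_lt_mul_of_pos_left hr2 (pow_pos h0 5)]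
      -- upper bound: sin r - r cos r ≤ (r²/3 + r⁴/20) sin r
      have hub : Real.sin r - r * Real.cos r ≤ (r^2/3 + r^4/20) * Real.sin r := by
        have hsl := sin_lb0 r h0.le
        have hsu := sin_ub r h0.le
        have hcl := cos_lb r h0.le
        nlinarith [mul_le_mul_of_nonneg_left hsl (by positivity : (0:ℝ) ≤ r^2/3 + r^4/20),
          mul_le_mul_of_nonneg_left hcl (by positivity : (0:ℝ) ≤ r),
          hsu, mul_lt_mul_of_pos_left hr2 (pow_pos h0 5)]
      have hψub : ψ r ≤ 23/60 := by
        rw [hψval r h0.ne', div_le_iff₀ (by positivity)]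
        rw [show 1 - r * (Real.cos r / Real.sin r) = (Real.sin r - r * Real.cos r) / Real.sin r
          by field_simp]
        rw [div_le_iff₀ hs]
        nlinarith [pow_lt_one₀ h0.le h1 (by norm_num : 4 ≠ 0), mul_pos (pow_pos h0 2) hs,
          mul_pos (pow_pos h0 4) hs]
      have hψp : 0 < ψ r := hψpos r h0 hrπ
      rw [hiden r h0 hs.ne']
      have h2 : (1:ℝ)/20 ≤ (3 * Real.sin r - 3 * r * Real.cos r - r^2 * Real.sin r)
          / (r^4 * Real.sin r) := by
        rw [le_div_iff₀ (by positivity)]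
        linarith [hKlb]
      nlinarith [hψub, hψp.le]
    have hLle : L ≤ 349/3600 := by
      have hev : ∀ᶠ r in nhdsWithin (0:ℝ) (Set.Ioi 0), deriv ψ r / r ≤ 349/3600 := by
        filter_upwards [Ioo_mem_nhdsGT_of_mem (by constructor <;> norm_num :
          (0:ℝ) ∈ Ico (0:ℝ) 1)] with r hr
        exact hbound r hr.1 hr.2
      exact le_of_tendsto hL hev
    have hψ0 : ψ 0 = 1/3 := by rw [hψ 0]; norm_num
    rw [hψ0, gt_iff_lt]
    refine (Real.sqrt_lt' (by norm_num)).2 ?_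
    nlinarith
end

section
/- Let ϑ₁ ∈ (π, 3π/2) be the unique solution of tan(s) = s in that interval, and let π < r < ϑ₁. Define ψ(r) = (1 − r·cot r)/r², K₁ = ψ'(r)/r, and K₂ = r^{−1}·(ψ'(r)/r)'. Then ψ(r) < 0, K₁ > 0, K₂ < 0, and 2·ψ(r)·K₂ − 4·K₁² < 0. -/
open Real Set

private lemma auxQ (u v : ℝ) (hu : 1 < u) (hv : 9 + u ^ 2 ≤ v) :
    -4 * v ^ 2 + (4 * u ^ 2 - 6 * u + 10) * v + 2 * u ^ 2 - 6 * u < 0 := by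
  nlinarith [mul_pos (by nlinarith : (0:ℝ) < v) (by nlinarith : (0:ℝ) < v - u ^ 2 - 5),
    mul_pos (by linarith : (0:ℝ) < u) (by nlinarith : (0:ℝ) < v), sq_nonneg u, sq_nonneg (u - 1)]

private lemma tan_lt_self {r ϑ₁ : ℝ} (hϑ₁ : ϑ₁ ∈ Set.Ioo Real.pi (3 * Real.pi / 2))
    (htan : Real.tan ϑ₁ = ϑ₁) (hr₁ : Real.pi < r) (hr₂ : r < ϑ₁) : Real.tan r < r := by
  obtain ⟨h1, h2⟩ := hϑ₁
  set t := r - π with ht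
  set t₁ := ϑ₁ - π with ht₁
  have hπ := Real.pi_pos
  have htpos : 0 < t := by simp [ht]; linarith
  have htt₁ : t < t₁ := by simp [ht, ht₁]; linarith
  have ht₁lt : t₁ < π / 2 := by simp [ht₁]; linarith
  have hmono : StrictMonoOn (fun y => Real.tan y - y) (Set.Icc t t₁) := by
    apply strictMonoOn_of_deriv_pos (convex_Icc t t₁)
    · apply ContinuousOn.sub _ continuousOn_id
      apply Real.continuousOn_tan.mono
      intro y hy
      exact ne_of_gt (Real.cos_pos_of_mem_Ioo ⟨by linarith [hy.1], by linarith [hy.2]⟩)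
    · intro y hy
      rw [interior_Icc] at hy
      have hcy : Real.cos y ≠ 0 :=
        ne_of_gt (Real.cos_pos_of_mem_Ioo ⟨by linarith [hy.1], by linarith [hy.2]⟩)
      have hd : HasDerivAt (fun y => Real.tan y - y) (1 / Real.cos y ^ 2 - 1) y :=
        (Real.hasDerivAt_tan hcy).sub (hasDerivAt_id y)
      rw [hd.deriv]
      have hsy : 0 < Real.sin y :=
        Real.sin_pos_of_pos_of_lt_pi (hy.1.trans' htpos) (by linarith [hy.2])
      have : Real.cos y ^ 2 < 1 := by nlinarith [Real.sin_sq_add_cos_sq y]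
      have h2 : 0 < Real.cos y ^ 2 := by positivity
      rw [sub_pos, lt_div_iff₀ h2]
      linarith
  have key : Real.tan t - t < Real.tan t₁ - t₁ :=
    hmono ⟨le_refl t, le_of_lt htt₁⟩ ⟨le_of_lt htt₁, le_refl t₁⟩ htt₁
  have h3 : Real.tan t₁ = ϑ₁ := by
    have h := Real.tan_add_pi t₁
    rw [show t₁ + π = ϑ₁ from by rw [ht₁]; ring] at h
    exact h.symm.trans htan
  have h4 : Real.tan r = Real.tan t := by
    have h := Real.tan_add_pi t
    rw [show t + π = r from by rw [ht]; ring] at h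
    exact h
  rw [h4]
  rw [h3, ht₁] at key
  linarith

set_option maxHeartbeats 1000000 in
theorem statement6
    (ψ : ℝ → ℝ)
    (hψ : ∀ s, ψ s = (1 - s * Real.cot s) / s ^ 2)
    (ϑ₁ : ℝ) (hϑ₁ : ϑ₁ ∈ Set.Ioo Real.pi (3 * Real.pi / 2))
    (htan : Real.tan ϑ₁ = ϑ₁)
    (r : ℝ) (hr₁ : Real.pi < r) (hr₂ : r < ϑ₁) :
    ψ r < 0 ∧
    deriv ψ r / r > 0 ∧
    deriv (fun x => deriv ψ x / x) r / r < 0 ∧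
    2 * ψ r * (deriv (fun x => deriv ψ x / x) r / r) - 4 * (deriv ψ r / r) ^ 2 < 0 := by
  have hπ := Real.pi_pos
  have hπ314 := Real.pi_gt_d6
  obtain ⟨h1, h2⟩ := hϑ₁
  have hr0 : 0 < r := lt_trans hπ hr₁
  -- basic trig facts at r
  have hsinr : Real.sin r < 0 := by
    have hs : 0 < Real.sin (r - π) :=
      Real.sin_pos_of_pos_of_lt_pi (by linarith) (by linarith)
    calc Real.sin r = Real.sin (r - π + π) := by ring_nf
    _ = -Real.sin (r - π) := Real.sin_add_pi _
    _ < 0 := by linarith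
  have hsne : Real.sin r ≠ 0 := ne_of_lt hsinr
  have htanr : Real.tan r < r := tan_lt_self ⟨h1, h2⟩ htan hr₁ hr₂
  have htanpos : 0 < Real.tan r := by
    have h4 : Real.tan r = Real.tan (r - π) := by
      have h := Real.tan_add_pi (r - π)
      rw [show r - π + π = r from by ring] at h
      exact h
    rw [h4]
    exact Real.tan_pos_of_pos_of_lt_pi_div_two (by linarith) (by linarith)
  -- key fact : r * cot r > 1
  set c : ℝ := Real.cos r / Real.sin r with hc
  have hcot : Real.cot r = c := Real.cot_eq_cos_div_sin r
  have hcinv : c = (Real.tan r)⁻¹ := by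
    rw [hc, Real.tan_eq_sin_div_cos, inv_div]
  have hu : 1 < r * c := by
    rw [hcinv, show r * (Real.tan r)⁻¹ = r / Real.tan r by ring, lt_div_iff₀ htanpos]
    linarith
  have hcpos : 0 < c := by
    rw [hcinv]; exact inv_pos.mpr htanpos
  have hcosr : Real.cos r < 0 := by
    have h : Real.cos r = c * Real.sin r := by
      rw [hc]; field_simp
    rw [h]; exact mul_neg_of_pos_of_neg hcpos hsinr
  have hUlt : r * Real.cos r < Real.sin r := by
    have h := mul_lt_mul_of_neg_right hu hsinr
    rw [one_mul] at h
    have h2 : r * c * Real.sin r = r * Real.cos r := by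
      rw [hc]; field_simp
    linarith [h2 ▸ h]
  have hpy := Real.sin_sq_add_cos_sq r
  have hr2 : (9:ℝ) < r ^ 2 := by nlinarith
  have hrne : r ≠ 0 := ne_of_gt hr0
  -- rewrite ψ as an explicit function
  have hψfun : ψ = fun x => (1 - x * (Real.cos x / Real.sin x)) / x ^ 2 := by
    funext x; rw [hψ x, Real.cot_eq_cos_div_sin]
  -- derivative of cot at points where sin ≠ 0
  have hcotD : ∀ x : ℝ, Real.sin x ≠ 0 →
      HasDerivAt (fun y => Real.cos y / Real.sin y) (-(1 / Real.sin x ^ 2)) x := by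
    intro x hx
    have h : HasDerivAt (fun y => Real.cos y / Real.sin y) _ x := (Real.hasDerivAt_cos x).div (Real.hasDerivAt_sin x) hx
    convert h using 1
    have hpyx := Real.sin_sq_add_cos_sq x
    rw [show -Real.sin x * Real.sin x - Real.cos x * Real.cos x = -1 from by
      linear_combination -hpyx]
    field_simp
  -- first derivative of ψ
  have hψ' : ∀ x : ℝ, Real.sin x ≠ 0 → x ≠ 0 →
      HasDerivAt ψ ((x ^ 2 / Real.sin x ^ 2
        + x * (Real.cos x / Real.sin x) - 2) / x ^ 3) x := by
    intro x hsx hx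
    rw [hψfun]
    have hnum : HasDerivAt (fun y => 1 - y * (Real.cos y / Real.sin y))
        (0 - (1 * (Real.cos x / Real.sin x) + x * (-(1 / Real.sin x ^ 2)))) x :=
      (hasDerivAt_const x 1).sub ((hasDerivAt_id x).mul (hcotD x hsx))
    have hden : HasDerivAt (fun y : ℝ => y ^ 2) (2 * x) x := by
      simpa using hasDerivAt_pow 2 x
    have h : HasDerivAt (fun y => (1 - y * (Real.cos y / Real.sin y)) / y ^ 2) _ x := hnum.div hden (by positivity)
    convert h using 1
    field_simp
    ring
  have hderivψ : ∀ x : ℝ, Real.sin x ≠ 0 → x ≠ 0 →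
      deriv ψ x = (x ^ 2 / Real.sin x ^ 2
        + x * (Real.cos x / Real.sin x) - 2) / x ^ 3 := fun x hsx hx =>
    (hψ' x hsx hx).deriv
  have hd1 : deriv ψ r = (r ^ 2 / Real.sin r ^ 2
      + r * (Real.cos r / Real.sin r) - 2) / r ^ 3 := hderivψ r hsne hrne
  -- second derivative computation
  have hev : (fun x => deriv ψ x / x) =ᶠ[nhds r]
      (fun x => (x ^ 2 / Real.sin x ^ 2
        + x * (Real.cos x / Real.sin x) - 2) / x ^ 4) := by
    have hopen : IsOpen {x : ℝ | Real.sin x ≠ 0 ∧ x ≠ 0} := by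
      have ha : IsOpen {x : ℝ | Real.sin x ≠ 0} :=
        isOpen_ne_fun Real.continuous_sin continuous_const
      have hb : IsOpen {x : ℝ | x ≠ 0} := isOpen_ne
      exact ha.inter hb
    filter_upwards [hopen.mem_nhds ⟨hsne, hrne⟩] with x hx
    rw [hderivψ x hx.1 hx.2, div_div, ← pow_succ]
  have hs2ne : Real.sin r ^ 2 ≠ 0 := by positivity
  have hx2 : HasDerivAt (fun y : ℝ => y ^ 2) (2 * r) r := by
    simpa using hasDerivAt_pow 2 r
  have hsin2 : HasDerivAt (fun y => Real.sin y ^ 2)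
      (2 * Real.sin r * Real.cos r) r := by
    have : HasDerivAt (fun y => Real.sin y ^ 2) _ r := (Real.hasDerivAt_sin r).pow 2
    simpa [mul_comm, mul_assoc, mul_left_comm] using this
  have hx4 : HasDerivAt (fun y : ℝ => y ^ 4) (4 * r ^ 3) r := by
    simpa using hasDerivAt_pow 4 r
  have hFull := (((hx2.div hsin2 hs2ne).add
    ((hasDerivAt_id r).mul (hcotD r hsne))).sub
      (hasDerivAt_const r 2)).div hx4 (by positivity : r ^ 4 ≠ 0)
  simp only [id_eq] at hFull
  have hd2 : deriv (fun x => deriv ψ x / x) r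
      = (8 * Real.sin r ^ 3 - 3 * r ^ 2 * Real.sin r - 2 * r ^ 3 * Real.cos r
          - 3 * r * Real.cos r * Real.sin r ^ 2) / (Real.sin r ^ 3 * r ^ 5) := by
    rw [hev.deriv_eq, show deriv (fun x => (x ^ 2 / Real.sin x ^ 2 + x * (Real.cos x / Real.sin x) - 2) / x ^ 4) r = _ from hFull.deriv]
    simp only [Pi.div_apply, Pi.add_apply, Pi.sub_apply, Pi.mul_apply, id_eq]
    field_simp
    ring
  refine ⟨?_, ?_, ?_, ?_⟩
  · rw [hψ r, hcot]
    apply div_neg_of_neg_of_pos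
    · linarith
    · positivity
  · rw [hd1, div_div, ← pow_succ]
    apply div_pos
    · have hprod : 0 < (Real.sin r - r * Real.cos r) * (-Real.sin r) :=
        mul_pos (by linarith) (by linarith)
      have h2 : Real.sin r ^ 2 ≤ 1 := by nlinarith [sq_nonneg (Real.cos r)]
      rw [show r ^ 2 / Real.sin r ^ 2 + r * (Real.cos r / Real.sin r) - 2
          = (r ^ 2 + r * Real.cos r * Real.sin r - 2 * Real.sin r ^ 2)
            / Real.sin r ^ 2 from by field_simp]
      apply div_pos _ (by positivity)
      nlinarith [hprod]
    · positivity
  · rw [hd2, div_div]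
    apply div_neg_of_pos_of_neg
    · have hA : 0 < -Real.sin r * (3 * r ^ 2 - 8 * Real.sin r ^ 2) := by
        apply mul_pos (by linarith)
        nlinarith [sq_nonneg (Real.cos r)]
      have hB : 0 < (r * -Real.cos r) * (2 * r ^ 2 + 3 * Real.sin r ^ 2) := by
        apply mul_pos (mul_pos hr0 (by linarith)) (by positivity)
      nlinarith [hA, hB]
    · have h3 : Real.sin r ^ 3 < 0 := by
        nlinarith [mul_neg_of_neg_of_pos hsinr (by positivity : (0:ℝ) < Real.sin r ^ 2)]
      calc Real.sin r ^ 3 * r ^ 5 * r = Real.sin r ^ 3 * (r ^ 5 * r) := by ring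
      _ < 0 := mul_neg_of_neg_of_pos h3 (by positivity)
  · have key : 2 * ψ r * (deriv (fun x => deriv ψ x / x) r / r)
        - 4 * (deriv ψ r / r) ^ 2
        = (-4 * (r ^ 2 / Real.sin r ^ 2) ^ 2
           + (4 * (r * Real.cos r / Real.sin r) ^ 2
              - 6 * (r * Real.cos r / Real.sin r) + 10) * (r ^ 2 / Real.sin r ^ 2)
           + 2 * (r * Real.cos r / Real.sin r) ^ 2
           - 6 * (r * Real.cos r / Real.sin r)) / r ^ 8 := by
      rw [hψ r, hcot, hc, hd1, hd2]
      field_simp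
      ring
    rw [key]
    apply div_neg_of_neg_of_pos _ (by positivity)
    have hs2 : (0:ℝ) < Real.sin r ^ 2 := by positivity
    have hu' : 1 < r * Real.cos r / Real.sin r := by
      rw [mul_div_assoc]; exact hu
    have hv' : 9 + (r * Real.cos r / Real.sin r) ^ 2 ≤ r ^ 2 / Real.sin r ^ 2 := by
      have hpy2 : r ^ 2 * Real.sin r ^ 2 + r ^ 2 * Real.cos r ^ 2 = r ^ 2 := by
        linear_combination r ^ 2 * hpy
      have key2 : 9 * Real.sin r ^ 2 + (r * Real.cos r) ^ 2 ≤ r ^ 2 := by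
        nlinarith [mul_nonneg (by linarith : (0:ℝ) ≤ r ^ 2 - 9) (sq_nonneg (Real.sin r))]
      rw [div_pow, le_div_iff₀ hs2]
      have e : (9 + (r * Real.cos r) ^ 2 / Real.sin r ^ 2) * Real.sin r ^ 2
          = 9 * Real.sin r ^ 2 + (r * Real.cos r) ^ 2 := by
        field_simp
      rw [e]
      exact key2
    exact auxQ _ _ hu' hv'
end

section
/- Suppose U : ℝ^m → Herm(ℂ^q) is a real-linear map into Hermitian matrices such that U(λ) is invertible for every λ ≠ 0 (the Métivier condition). Let Ω* = {τ ∈ ℝ^m : ‖U(τ)‖ < π}. Then the closure of Ω* is strictly convex: for any τ ≠ τ' in the closure of Ω* and any 0 < s < 1, one has s·τ + (1−s)·τ' ∈ Ω*. -/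
set_option maxHeartbeats 1000000
set_option synthInstance.maxHeartbeats 200000
open scoped InnerProductSpace

lemma aux_norm_attained {E : Type*} [NormedAddCommGroup E] [InnerProductSpace ℂ E]
    [FiniteDimensional ℂ E] (C : E →L[ℂ] E) (hne : C ≠ 0) :
    ∃ v : E, ‖v‖ = 1 ∧ ‖C v‖ = ‖C‖ := by
  have hnt : Nontrivial E := by
    by_contra h
    rw [not_nontrivial_iff_subsingleton] at h
    exact hne (ContinuousLinearMap.ext fun x => Subsingleton.elim _ _)
  obtain ⟨x0, hx0⟩ := exists_norm_eq E (by norm_num : (0:ℝ) ≤ 1)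
  have hsne : (Metric.sphere (0:E) 1).Nonempty := ⟨x0, by simpa using hx0⟩
  have hcomp : IsCompact (Metric.sphere (0:E) 1) := isCompact_sphere 0 1
  have hcont : Continuous fun v : E => ‖C v‖ := (C.continuous.norm)
  obtain ⟨v, hvmem, hvmax⟩ := hcomp.exists_isMaxOn hsne hcont.continuousOn
  have hv1 : ‖v‖ = 1 := by simpa using hvmem
  refine ⟨v, hv1, le_antisymm (by simpa [hv1] using C.le_opNorm v) ?_⟩
  refine C.opNorm_le_bound (norm_nonneg _) fun x => ?_
  rcases eq_or_ne x 0 with rfl | hx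
  · simp
  · have hxn : ‖x‖ ≠ 0 := norm_ne_zero_iff.mpr hx
    have hmem : (((‖x‖:ℂ))⁻¹ • x) ∈ Metric.sphere (0:E) 1 := by
      simp [norm_smul, abs_of_nonneg (inv_nonneg.mpr (norm_nonneg x)), inv_mul_cancel₀ hxn]
    have := hvmax hmem
    have h2 : ‖C (((‖x‖:ℂ))⁻¹ • x)‖ = ‖x‖⁻¹ * ‖C x‖ := by
      rw [map_smul, norm_smul]
      simp [abs_of_nonneg (inv_nonneg.mpr (norm_nonneg x))]
    simp only [Set.mem_setOf_eq] at this
    rw [h2] at this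
    have hxpos : (0:ℝ) < ‖x‖ := lt_of_le_of_ne (norm_nonneg x) (Ne.symm hxn)
    calc ‖C x‖ = ‖x‖ * (‖x‖⁻¹ * ‖C x‖) := by field_simp
    _ ≤ ‖x‖ * ‖C v‖ := by
        exact mul_le_mul_of_nonneg_left this (norm_nonneg x)
    _ = ‖C v‖ * ‖x‖ := mul_comm _ _

lemma aux_sharp {E : Type*} [NormedAddCommGroup E] [InnerProductSpace ℂ E]
    (x u : E) (hu : ‖u‖ = 1) (c : ℝ) (hx : ‖x‖ ≤ c) (h : Complex.re ⟪x, u⟫_ℂ = c) :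
    x = (c : ℂ) • u := by
  have hc0 : 0 ≤ c := le_trans (norm_nonneg x) hx
  have h1 : ‖x - (c:ℂ) • u‖ ^ 2 = ‖x‖ ^ 2 - 2 * RCLike.re ⟪x, (c:ℂ) • u⟫_ℂ + ‖(c:ℂ) • u‖ ^ 2 :=
    norm_sub_sq x ((c:ℂ) • u)
  have h2 : ⟪x, (c:ℂ) • u⟫_ℂ = (c:ℂ) * ⟪x, u⟫_ℂ := inner_smul_right x u _
  have h3 : RCLike.re ⟪x, (c:ℂ) • u⟫_ℂ = c * c := by
    rw [h2]; simp [Complex.mul_re, h]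
  have h4 : ‖(c:ℂ) • u‖ = c := by
    rw [norm_smul, hu]; simp [abs_of_nonneg hc0]
  have h5 : ‖x - (c:ℂ) • u‖ ^ 2 ≤ 0 := by
    rw [h1, h3, h4]
    nlinarith [norm_nonneg x]
  have h6 : ‖x - (c:ℂ) • u‖ = 0 := by
    nlinarith [norm_nonneg (x - (c:ℂ) • u)]
  exact sub_eq_zero.mp (norm_eq_zero.mp h6)

lemma aux_eigen {E : Type*} [NormedAddCommGroup E] [InnerProductSpace ℂ E]
    [FiniteDimensional ℂ E] (C : E →L[ℂ] E) (hC : IsSelfAdjoint C) (hne : C ≠ 0) :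
    ∃ u : E, ‖u‖ = 1 ∧ (C u = (‖C‖ : ℂ) • u ∨ C u = -((‖C‖ : ℂ) • u)) := by
  obtain ⟨v, hv1, hvC⟩ := aux_norm_attained C hne
  have hadj := ContinuousLinearMap.isSelfAdjoint_iff'.mp hC
  have hsym : ∀ x y : E, ⟪C x, y⟫_ℂ = ⟪x, C y⟫_ℂ := by
    intro x y
    conv_lhs => rw [← hadj]
    exact ContinuousLinearMap.adjoint_inner_left C y x
  have hre : Complex.re ⟪C (C v), v⟫_ℂ = ‖C‖ ^ 2 := by
    rw [hsym (C v) v]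
    have : Complex.re ⟪C v, C v⟫_ℂ = ‖C v‖ ^ 2 := @inner_self_eq_norm_sq ℂ _ _ _ _ (C v)
    rw [this, hvC]
  have hnorm2 : ‖C (C v)‖ ≤ ‖C‖ ^ 2 := by
    calc ‖C (C v)‖ ≤ ‖C‖ * ‖C v‖ := C.le_opNorm _
    _ = ‖C‖ ^ 2 := by rw [hvC]; ring
  have hsq : C (C v) = ((‖C‖ ^ 2 : ℝ) : ℂ) • v := aux_sharp (C (C v)) v hv1 _ hnorm2 hre
  set w : E := C v + (‖C‖ : ℂ) • v with hw
  rcases eq_or_ne w 0 with hw0 | hw0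
  · refine ⟨v, hv1, Or.inr ?_⟩
    exact eq_neg_of_add_eq_zero_left hw0
  · refine ⟨((‖w‖:ℂ))⁻¹ • w, ?_, Or.inl ?_⟩
    · rw [norm_smul]
      simp [abs_of_nonneg (inv_nonneg.mpr (norm_nonneg w)), inv_mul_cancel₀ (norm_ne_zero_iff.mpr hw0)]
    · have hCw : C w = (‖C‖:ℂ) • w := by
        have hcast : ((‖C‖ ^ 2 : ℝ) : ℂ) = (‖C‖:ℂ) * (‖C‖:ℂ) := by push_cast; ring
        rw [hw, map_add, map_smul, hsq, smul_add, smul_smul, hcast, add_comm]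
      rw [map_smul, hCw, smul_comm]

open Matrix Set

theorem statement10 {m q : ℕ}
    (U : (Fin m → ℝ) →ₗ[ℝ] Matrix (Fin q) (Fin q) ℂ)
    (hherm : ∀ lam : Fin m → ℝ, (U lam).IsHermitian)
    (hmet : ∀ lam : Fin m → ℝ, lam ≠ 0 → IsUnit (U lam))
    (Ωstar : Set (Fin m → ℝ))
    (hΩ : Ωstar = {τ | ‖Matrix.toEuclideanCLM (𝕜 := ℂ) (U τ)‖ < Real.pi}) :
    ∀ τ ∈ closure Ωstar, ∀ τ' ∈ closure Ωstar, τ ≠ τ' →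
      ∀ s : ℝ, 0 < s → s < 1 → s • τ + (1 - s) • τ' ∈ Ωstar := by
  subst hΩ
  intro τ hτ τ' hτ' hne s hs0 hs1
  have hπ := Real.pi_pos
  set T : (Fin m → ℝ) → (EuclideanSpace ℂ (Fin q) →L[ℂ] EuclideanSpace ℂ (Fin q)) :=
    fun v => Matrix.toEuclideanCLM (𝕜 := ℂ) (U v) with hT
  have hsmulM : ∀ (c : ℝ) (v : Fin m → ℝ), T (c • v) = (c : ℂ) • T v := by
    intro c v
    have h1 : U (c • v) = (c:ℂ) • U v := by
      rw [U.map_smul]; exact (Complex.coe_smul c (U v)).symm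
    show Matrix.toEuclideanCLM (𝕜 := ℂ) (U (c • v)) = (c : ℂ) • Matrix.toEuclideanCLM (𝕜 := ℂ) (U v)
    rw [h1, _root_.map_smul]
  have haddM : ∀ (a b : Fin m → ℝ), T (a + b) = T a + T b := by
    intro a b
    show Matrix.toEuclideanCLM (𝕜 := ℂ) (U (a + b)) = _
    rw [U.map_add, _root_.map_add]
  have hnormsmul : ∀ (c : ℝ) (X : EuclideanSpace ℂ (Fin q) →L[ℂ] EuclideanSpace ℂ (Fin q)),
      ‖(c:ℂ) • X‖ = |c| * ‖X‖ := by
    intro c X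
    have := norm_smul ((c:ℂ)) X
    rw [this]
    simp
  have hG : Continuous T := by
    let G : (Fin m → ℝ) →ₗ[ℝ] (EuclideanSpace ℂ (Fin q) →L[ℂ] EuclideanSpace ℂ (Fin q)) :=
      { toFun := T
        map_add' := haddM
        map_smul' := fun c v => by
          show T (c • v) = c • T v
          rw [hsmulM c v]
          ext1 x
          rw [ContinuousLinearMap.smul_apply, ContinuousLinearMap.smul_apply,
            Complex.coe_smul] }
    exact G.continuous_of_finiteDimensional
  have hfc : Continuous fun v => ‖T v‖ := hG.norm
  have hcl : ∀ v ∈ closure {τ : Fin m → ℝ | ‖T τ‖ < Real.pi}, ‖T v‖ ≤ Real.pi := by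
    intro v hv
    have hsub : closure {τ : Fin m → ℝ | ‖T τ‖ < Real.pi} ⊆ {τ | ‖T τ‖ ≤ Real.pi} :=
      closure_minimal (fun x hx => (le_of_lt hx : ‖T x‖ ≤ Real.pi))
        (isClosed_le hfc continuous_const)
    exact hsub hv
  have hτle : ‖T τ‖ ≤ Real.pi := hcl τ hτ
  have hτ'le : ‖T τ'‖ ≤ Real.pi := hcl τ' hτ'
  have hsa : ∀ v, IsSelfAdjoint (T v) := by
    intro v
    have h1 : IsSelfAdjoint (U v) := hherm v
    exact h1.map (Matrix.toEuclideanCLM (𝕜 := ℂ))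
  by_contra hcon
  simp only [Set.mem_setOf_eq, not_lt] at hcon
  set σ := s • τ + (1 - s) • τ' with hσ
  have hconσ : Real.pi ≤ ‖T σ‖ := hcon
  have htri : ‖T σ‖ ≤ s * ‖T τ‖ + (1 - s) * ‖T τ'‖ := by
    calc ‖T σ‖ = ‖T (s • τ) + T ((1 - s) • τ')‖ := by rw [← haddM]
    _ ≤ ‖T (s • τ)‖ + ‖T ((1 - s) • τ')‖ := norm_add_le _ _
    _ = s * ‖T τ‖ + (1 - s) * ‖T τ'‖ := by
        rw [hsmulM, hsmulM, hnormsmul, hnormsmul,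
          abs_of_pos hs0, abs_of_pos (by linarith : (0:ℝ) < 1 - s)]
  have hτpi : ‖T τ‖ = Real.pi := by nlinarith
  have hτ'pi : ‖T τ'‖ = Real.pi := by nlinarith
  have hσpi : ‖T σ‖ = Real.pi := by nlinarith
  set A := T (s • τ) with hA
  set B := T ((1 - s) • τ') with hB
  have hAnorm : ‖A‖ = s * Real.pi := by
    rw [hA, hsmulM, hnormsmul, hτpi, abs_of_pos hs0]
  have hBnorm : ‖B‖ = (1 - s) * Real.pi := by
    rw [hB, hsmulM, hnormsmul, hτ'pi, abs_of_pos (by linarith : (0:ℝ) < 1 - s)]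
  have hCAB : T σ = A + B := by rw [hσ, haddM]
  have hCne : T σ ≠ 0 := by
    intro h; rw [h, norm_zero] at hσpi; linarith
  obtain ⟨u, hu1, hu⟩ := aux_eigen (T σ) (hsa σ) hCne
  rw [hσpi] at hu
  have hAu_le : ‖A u‖ ≤ s * Real.pi := by
    calc ‖A u‖ ≤ ‖A‖ * ‖u‖ := A.le_opNorm u
    _ = s * Real.pi := by rw [hAnorm, hu1, mul_one]
  have hBu_le : ‖B u‖ ≤ (1 - s) * Real.pi := by
    calc ‖B u‖ ≤ ‖B‖ * ‖u‖ := B.le_opNorm u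
    _ = (1 - s) * Real.pi := by rw [hBnorm, hu1, mul_one]
  have hra_abs : ‖⟪A u, u⟫_ℂ‖ ≤ s * Real.pi := by
    calc ‖⟪A u, u⟫_ℂ‖ ≤ ‖A u‖ * ‖u‖ := norm_inner_le_norm _ _
    _ ≤ s * Real.pi := by rw [hu1, mul_one]; exact hAu_le
  have hrb_abs : ‖⟪B u, u⟫_ℂ‖ ≤ (1 - s) * Real.pi := by
    calc ‖⟪B u, u⟫_ℂ‖ ≤ ‖B u‖ * ‖u‖ := norm_inner_le_norm _ _
    _ ≤ (1 - s) * Real.pi := by rw [hu1, mul_one]; exact hBu_le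
  have hra_ub : Complex.re ⟪A u, u⟫_ℂ ≤ s * Real.pi := by
    have h := Complex.abs_re_le_norm ⟪A u, u⟫_ℂ
    have := abs_le.mp (le_trans h hra_abs)
    linarith [this.2]
  have hra_lb : -(s * Real.pi) ≤ Complex.re ⟪A u, u⟫_ℂ := by
    have h := Complex.abs_re_le_norm ⟪A u, u⟫_ℂ
    have := abs_le.mp (le_trans h hra_abs)
    linarith [this.1]
  have hrb_ub : Complex.re ⟪B u, u⟫_ℂ ≤ (1 - s) * Real.pi := by
    have h := Complex.abs_re_le_norm ⟪B u, u⟫_ℂ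
    have := abs_le.mp (le_trans h hrb_abs)
    linarith [this.2]
  have hrb_lb : -((1 - s) * Real.pi) ≤ Complex.re ⟪B u, u⟫_ℂ := by
    have h := Complex.abs_re_le_norm ⟪B u, u⟫_ℂ
    have := abs_le.mp (le_trans h hrb_abs)
    linarith [this.1]
  have hsum : Complex.re ⟪A u, u⟫_ℂ + Complex.re ⟪B u, u⟫_ℂ = Complex.re ⟪T σ u, u⟫_ℂ := by
    rw [hCAB, ContinuousLinearMap.add_apply, inner_add_left, Complex.add_re]
  have huu : ⟪u, u⟫_ℂ = 1 := by
    rw [@inner_self_eq_norm_sq_to_K ℂ, hu1]; norm_num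
  have hs' : (s : ℂ) ≠ 0 := by exact_mod_cast ne_of_gt hs0
  have hs1' : ((1 - s : ℝ) : ℂ) ≠ 0 := by
    exact_mod_cast ne_of_gt (by linarith : (0:ℝ) < 1 - s)
  have hkey : T τ u = T τ' u := by
    rcases hu with hpos | hneg
    · have hCre : Complex.re ⟪T σ u, u⟫_ℂ = Real.pi := by
        rw [hpos, inner_smul_left, huu, mul_one]; simp
      have hra : Complex.re ⟪A u, u⟫_ℂ = s * Real.pi := by linarith
      have hrb : Complex.re ⟪B u, u⟫_ℂ = (1 - s) * Real.pi := by linarith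
      have hAeq : A u = ((s * Real.pi : ℝ) : ℂ) • u := aux_sharp (A u) u hu1 _ hAu_le hra
      have hBeq : B u = (((1 - s) * Real.pi : ℝ) : ℂ) • u :=
        aux_sharp (B u) u hu1 _ hBu_le hrb
      have hTτ : T τ u = ((Real.pi : ℝ) : ℂ) • u := by
        apply smul_right_injective _ hs'
        show (s : ℂ) • (T τ u) = (s : ℂ) • (((Real.pi : ℝ) : ℂ) • u)
        rw [← ContinuousLinearMap.smul_apply, ← hsmulM, ← hA, hAeq, smul_smul]
        norm_cast
      have hTτ' : T τ' u = ((Real.pi : ℝ) : ℂ) • u := by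
        apply smul_right_injective _ hs1'
        show ((1 - s : ℝ) : ℂ) • (T τ' u) = ((1 - s : ℝ) : ℂ) • (((Real.pi : ℝ) : ℂ) • u)
        rw [← ContinuousLinearMap.smul_apply, ← hsmulM, ← hB, hBeq, smul_smul]
        norm_cast
      rw [hTτ, hTτ']
    · have hCre : Complex.re ⟪T σ u, u⟫_ℂ = -Real.pi := by
        rw [hneg, inner_neg_left, inner_smul_left, huu, mul_one]; simp
      have hra : Complex.re ⟪-(A u), u⟫_ℂ = s * Real.pi := by
        rw [inner_neg_left, Complex.neg_re]; linarith
      have hrb : Complex.re ⟪-(B u), u⟫_ℂ = (1 - s) * Real.pi := by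
        rw [inner_neg_left, Complex.neg_re]; linarith
      have hAeq : -(A u) = ((s * Real.pi : ℝ) : ℂ) • u :=
        aux_sharp (-(A u)) u hu1 _ (by rwa [norm_neg]) hra
      have hBeq : -(B u) = (((1 - s) * Real.pi : ℝ) : ℂ) • u :=
        aux_sharp (-(B u)) u hu1 _ (by rwa [norm_neg]) hrb
      have hAeq' : A u = -(((s * Real.pi : ℝ) : ℂ) • u) := by
        rw [← hAeq, neg_neg]
      have hBeq' : B u = -((((1 - s) * Real.pi : ℝ) : ℂ) • u) := by
        rw [← hBeq, neg_neg]
      have hTτ : T τ u = -(((Real.pi : ℝ) : ℂ) • u) := by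
        apply smul_right_injective _ hs'
        show (s : ℂ) • (T τ u) = (s : ℂ) • (-(((Real.pi : ℝ) : ℂ) • u))
        rw [← ContinuousLinearMap.smul_apply, ← hsmulM, ← hA, hAeq', smul_neg, smul_smul]
        norm_cast
      have hTτ' : T τ' u = -(((Real.pi : ℝ) : ℂ) • u) := by
        apply smul_right_injective _ hs1'
        show ((1 - s : ℝ) : ℂ) • (T τ' u) = ((1 - s : ℝ) : ℂ) • (-(((Real.pi : ℝ) : ℂ) • u))
        rw [← ContinuousLinearMap.smul_apply, ← hsmulM, ← hB, hBeq', smul_neg, smul_smul]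
        norm_cast
      rw [hTτ, hTτ']
  have hker : T (τ - τ') u = 0 := by
    have h1 : U (τ - τ') = U τ - U τ' := U.map_sub τ τ'
    show Matrix.toEuclideanCLM (𝕜 := ℂ) (U (τ - τ')) u = 0
    rw [h1, _root_.map_sub, ContinuousLinearMap.sub_apply]
    have h2 : Matrix.toEuclideanCLM (𝕜 := ℂ) (U τ) u = Matrix.toEuclideanCLM (𝕜 := ℂ) (U τ') u :=
      hkey
    rw [h2, sub_self]
  obtain ⟨Minv, hMinv⟩ := (hmet (τ - τ') (sub_ne_zero.mpr hne)).exists_left_inv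
  have hu0 : u = 0 := by
    have h1 : Matrix.toEuclideanCLM (𝕜 := ℂ) Minv (T (τ - τ') u) = u := by
      show Matrix.toEuclideanCLM (𝕜 := ℂ) Minv
        (Matrix.toEuclideanCLM (𝕜 := ℂ) (U (τ - τ')) u) = u
      rw [← ContinuousLinearMap.mul_apply, ← _root_.map_mul, hMinv, _root_.map_one,
        ContinuousLinearMap.one_apply]
    rw [hker, map_zero] at h1
    exact h1.symm
  rw [hu0, norm_zero] at hu1
  norm_num at hu1
end

section
/- For all q×q invertible complex matrices A, B and all real s, one has s·A^{−1} + (1−s)·B^{−1} − (s·A + (1−s)·B)^{−1} = s(1−s)·A^{−1}(B−A)B^{−1}·(s·B^{−1} + (1−s)·A^{−1})^{−1}·A^{−1}(B−A)B^{−1}, whenever s·A + (1−s)·B and s·B^{−1} + (1−s)·A^{−1} are invertible. -/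
/-! In the variables `X = A⁻¹`, `Y = B⁻¹` one has `s • A + (1 - s) • B = B * D * A` with
`D = s • Y + (1 - s) • X`, so its inverse is `X * D⁻¹ * Y`, while `A⁻¹ * (B - A) * B⁻¹ = X - Y`.
Since `D - X = s • (Y - X)` and `D - Y = (1 - s) • (X - Y)`, the right-hand side equals
`-(D - X) * D⁻¹ * (D - Y) = X + Y - D - X * D⁻¹ * Y`, which is the left-hand side. -/

open Matrix

theorem sub_mul_mul_sub_of_mul_eq_one {R : Type*} [Ring R] {D E : R} (X Y : R)
    (hDE : D * E = 1) (hED : E * D = 1) :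
    (D - X) * E * (D - Y) = D - X - Y + X * E * Y := by
  have hXED : X * E * D = X := by rw [mul_assoc, hED, mul_one]
  simp only [mul_sub, sub_mul, hXED, hDE, one_mul]
  abel

theorem smul_add_one_sub_smul_sub_mul_mul_eq {K R : Type*} [CommRing K] [Ring R] [Algebra K R]
    (s : K) (X Y E : R) (hDE : (s • Y + (1 - s) • X) * E = 1)
    (hED : E * (s • Y + (1 - s) • X) = 1) :
    s • X + (1 - s) • Y - X * E * Y = (s * (1 - s)) • ((X - Y) * E * (X - Y)) := by
  set D := s • Y + (1 - s) • X
  have hDX : D - X = s • (Y - X) := by module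
  have hDY : D - Y = (1 - s) • (X - Y) := by module
  calc s • X + (1 - s) • Y - X * E * Y = -((D - X) * E * (D - Y)) := by
        rw [sub_mul_mul_sub_of_mul_eq_one X Y hDE hED]; module
    _ = (s * (1 - s)) • ((X - Y) * E * (X - Y)) := by
        rw [hDX, hDY, ← neg_sub X Y]
        simp only [smul_mul_assoc, mul_smul_comm, smul_neg, neg_mul, neg_neg, smul_smul, mul_comm]

section

variable {n K : Type*} [Fintype n] [DecidableEq n] [CommRing K] {A B : Matrix n n K}

theorem inv_mul_sub_mul_inv (hA : IsUnit A.det) (hB : IsUnit B.det) :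
    A⁻¹ * (B - A) * B⁻¹ = A⁻¹ - B⁻¹ := by
  rw [mul_sub, sub_mul, mul_assoc, mul_nonsing_inv B hB, mul_one, nonsing_inv_mul A hA, one_mul]

theorem smul_add_one_sub_smul_inv (hA : IsUnit A.det) (hB : IsUnit B.det) (s : K) :
    (s • A + (1 - s) • B)⁻¹ = A⁻¹ * (s • B⁻¹ + (1 - s) • A⁻¹)⁻¹ * B⁻¹ := by
  have hfactor : s • A + (1 - s) • B = B * (s • B⁻¹ + (1 - s) • A⁻¹) * A := by
    rw [mul_add, add_mul, Matrix.mul_smul, Matrix.mul_smul, Matrix.smul_mul, Matrix.smul_mul,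
      mul_nonsing_inv B hB, one_mul, mul_assoc, nonsing_inv_mul A hA, mul_one]
  rw [hfactor, Matrix.mul_inv_rev, Matrix.mul_inv_rev, mul_assoc]

end

theorem statement11_general {q : ℕ}
    (A B : Matrix (Fin q) (Fin q) ℂ) (s : ℝ)
    (hA : IsUnit A.det) (hB : IsUnit B.det)
    (hBA : IsUnit ((s : ℂ) • B⁻¹ + ((1 : ℂ) - (s : ℂ)) • A⁻¹).det) :
    (s : ℂ) • A⁻¹ + ((1 : ℂ) - (s : ℂ)) • B⁻¹ -
        ((s : ℂ) • A + ((1 : ℂ) - (s : ℂ)) • B)⁻¹ =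
      ((s : ℂ) * ((1 : ℂ) - (s : ℂ))) •
        (A⁻¹ * (B - A) * B⁻¹ *
          ((s : ℂ) • B⁻¹ + ((1 : ℂ) - (s : ℂ)) • A⁻¹)⁻¹ *
          (A⁻¹ * (B - A) * B⁻¹)) := by
  rw [smul_add_one_sub_smul_inv hA hB, inv_mul_sub_mul_inv hA hB]
  exact smul_add_one_sub_smul_sub_mul_mul_eq _ _ _ _ (mul_nonsing_inv _ hBA)
    (nonsing_inv_mul _ hBA)

theorem statement11 {q : ℕ}
    (A B : Matrix (Fin q) (Fin q) ℂ) (s : ℝ)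
    (hA : IsUnit A.det) (hB : IsUnit B.det)
    (hAB : IsUnit ((s : ℂ) • A + ((1 : ℂ) - (s : ℂ)) • B).det)
    (hBA : IsUnit ((s : ℂ) • B⁻¹ + ((1 : ℂ) - (s : ℂ)) • A⁻¹).det) :
    (s : ℂ) • A⁻¹ + ((1 : ℂ) - (s : ℂ)) • B⁻¹ -
        ((s : ℂ) • A + ((1 : ℂ) - (s : ℂ)) • B)⁻¹ =
      ((s : ℂ) * ((1 : ℂ) - (s : ℂ))) •
        (A⁻¹ * (B - A) * B⁻¹ *
          ((s : ℂ) • B⁻¹ + ((1 : ℂ) - (s : ℂ)) • A⁻¹)⁻¹ *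
          (A⁻¹ * (B - A) * B⁻¹)) :=
  statement11_general A B s hA hB hBA
end

section
/- Let λ ∈ (−π, π). Then Σ_{j=1}^∞ (1/(jπ))·[ (1 − λ/(jπ))^{−2} − (1 + λ/(jπ))^{−2} ] = μ(λ), where μ(λ) = d/dλ (1 − λ·cot λ) = (2λ − sin 2λ)/(2 sin² λ) for λ ≠ 0 and μ(0) = 0. -/
open Real

lemma sumC (C : ℝ) : Summable (fun n : ℕ => C / ((n : ℝ) + 1) ^ 2) := by
  have h : Summable (fun n : ℕ => ((n : ℝ) + 1) ^ 2)⁻¹ := by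
    have := Real.summable_one_div_nat_pow.mpr (one_lt_two)
    have h2 := (summable_nat_add_iff 1).mpr this
    simpa [one_div, Pi.inv_def] using h2
  simpa [div_eq_mul_inv] using h.mul_left C

lemma denom_lb_s15 {x r : ℝ} (hr : r < Real.pi) (hx : |x| < r) (n : ℕ) :
    ((n : ℝ) + 1) ^ 2 * (Real.pi ^ 2 - r ^ 2) ≤ (((n : ℝ) + 1) * Real.pi) ^ 2 - x ^ 2 := by
  have h1 : (1 : ℝ) ≤ (n : ℝ) + 1 := by
    have := Nat.cast_nonneg (α := ℝ) n; linarith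
  have h2 : (1 : ℝ) ≤ ((n : ℝ) + 1) ^ 2 := by nlinarith
  have hx2 : x ^ 2 < r ^ 2 := by
    have := abs_lt.mp hx
    nlinarith [this.1, this.2]
  have h3 := mul_le_mul_of_nonneg_left h2 (sq_nonneg r)
  nlinarith

lemma denom_pos_s15 {x r : ℝ} (hr : r < Real.pi) (hx : |x| < r) (n : ℕ) :
    0 < (((n : ℝ) + 1) * Real.pi) ^ 2 - x ^ 2 := by
  have h0 : 0 ≤ r := le_trans (abs_nonneg x) hx.le
  have hpr : r ^ 2 < Real.pi ^ 2 := by nlinarith [Real.pi_pos]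
  have h2 : (0:ℝ) < ((n : ℝ) + 1) ^ 2 := by positivity
  have := denom_lb_s15 hr hx n
  nlinarith

lemma hasDerivAt_term (c y : ℝ) (hc : c - y ^ 2 ≠ 0) :
    HasDerivAt (fun x : ℝ => 2 * x ^ 2 / (c - x ^ 2)) (4 * y * c / (c - y ^ 2) ^ 2) y := by
  have h1 : HasDerivAt (fun x : ℝ => 2 * x ^ 2) (2 * (2 * y)) y :=
    (hasDerivAt_pow 2 y).const_mul 2 |>.congr_deriv (by push_cast; ring)
  have h2 : HasDerivAt (fun x : ℝ => c - x ^ 2) (-(2 * y)) y := by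
    simpa using ((hasDerivAt_pow 2 y).const_sub c).congr_deriv (by push_cast; ring)
  have := (h1.div h2 hc : HasDerivAt (fun x : ℝ => 2 * x ^ 2 / (c - x ^ 2)) _ y)
  exact this.congr_deriv (by ring)

lemma hasDerivAt_logterm_s15 (c y : ℝ) (hc : 0 < c) (hcy : c - y ^ 2 ≠ 0) :
    HasDerivAt (fun x : ℝ => Real.log (1 - x ^ 2 / c)) (-2 * y / (c - y ^ 2)) y := by
  have h2 : HasDerivAt (fun x : ℝ => 1 - x ^ 2 / c) (-(2 * y) / c) y := by
    simpa [div_eq_mul_inv] using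
      (((hasDerivAt_pow 2 y).mul_const c⁻¹).const_sub 1).congr_deriv (by push_cast; ring)
  have hne : 1 - y ^ 2 / c ≠ 0 := by
    intro h
    apply hcy
    field_simp at h ⊢
    linarith
  have := h2.log hne
  convert this using 1
  field_simp

lemma key_hasDerivAt_H {r lam : ℝ} (hr : r < Real.pi) (hlam : |lam| < r) :
    HasDerivAt (fun x : ℝ => ∑' n : ℕ, 2 * x ^ 2 / ((((n : ℝ) + 1) * Real.pi) ^ 2 - x ^ 2))
      (∑' n : ℕ, 4 * lam * (((n : ℝ) + 1) * Real.pi) ^ 2 /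
        ((((n : ℝ) + 1) * Real.pi) ^ 2 - lam ^ 2) ^ 2) lam := by
  have hr0 : 0 < r := lt_of_le_of_lt (abs_nonneg lam) hlam
  have hpr : 0 < Real.pi ^ 2 - r ^ 2 := by nlinarith [Real.pi_pos]
  apply hasDerivAt_tsum_of_isPreconnected (sumC (4 * r * Real.pi ^ 2 / (Real.pi ^ 2 - r ^ 2) ^ 2))
      isOpen_Ioo isPreconnected_Ioo
      (fun n y hy => by
        have hy' : |y| < r := abs_lt.mpr ⟨hy.1, hy.2⟩
        exact hasDerivAt_term _ y (ne_of_gt (denom_pos_s15 hr hy' n)))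
      (fun n y hy => ?_) (Set.mem_Ioo.mpr ⟨by linarith, hr0⟩) (by simpa using summable_zero)
      (Set.mem_Ioo.mpr (abs_lt.mp hlam))
  · have hy' : |y| < r := abs_lt.mpr ⟨hy.1, hy.2⟩
    set A : ℝ := (n : ℝ) + 1 with hA
    have hA1 : (1:ℝ) ≤ A := le_add_of_nonneg_left (Nat.cast_nonneg n)
    have hd := denom_lb_s15 hr hy' n
    have hd0 := denom_pos_s15 hr hy' n
    set d : ℝ := (A * Real.pi) ^ 2 - y ^ 2 with hdd
    have habs : ‖4 * y * (A * Real.pi) ^ 2 / d ^ 2‖ = 4 * |y| * (A * Real.pi) ^ 2 / d ^ 2 := by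
      rw [Real.norm_eq_abs, abs_div, abs_of_pos (pow_pos hd0 2), abs_mul, abs_mul]
      simp [abs_of_nonneg, Real.pi_pos.le, mul_nonneg, abs_of_nonneg (show (0:ℝ) ≤ A by linarith)]
    rw [habs, div_div, div_le_div_iff₀ (by positivity) (by positivity)]
    have hsq : (A ^ 2 * (Real.pi ^ 2 - r ^ 2)) ^ 2 ≤ d ^ 2 := by
      apply pow_le_pow_left₀ (by positivity) hd
    have key1 := mul_le_mul_of_nonneg_left hsq (show (0:ℝ) ≤ 4 * r * Real.pi ^ 2 by positivity)
    have key2 := mul_le_mul_of_nonneg_right hy'.le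
      (show (0:ℝ) ≤ 4 * Real.pi ^ 2 * A ^ 4 * (Real.pi ^ 2 - r ^ 2) ^ 2 by positivity)
    nlinarith [key1, key2]

lemma key_hasDerivAt_G {r lam : ℝ} (hr : r < Real.pi) (hlam : |lam| < r) :
    HasDerivAt (fun x : ℝ => ∑' n : ℕ, Real.log (1 - x ^ 2 / (((n : ℝ) + 1) * Real.pi) ^ 2))
      (∑' n : ℕ, -2 * lam / ((((n : ℝ) + 1) * Real.pi) ^ 2 - lam ^ 2)) lam := by
  have hr0 : 0 < r := lt_of_le_of_lt (abs_nonneg lam) hlam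
  have hpr : 0 < Real.pi ^ 2 - r ^ 2 := by nlinarith [Real.pi_pos]
  apply hasDerivAt_tsum_of_isPreconnected (sumC (2 * r / (Real.pi ^ 2 - r ^ 2)))
      isOpen_Ioo isPreconnected_Ioo
      (fun n y hy => by
        have hy' : |y| < r := abs_lt.mpr ⟨hy.1, hy.2⟩
        exact hasDerivAt_logterm_s15 _ y (by positivity) (ne_of_gt (denom_pos_s15 hr hy' n)))
      (fun n y hy => ?_) (Set.mem_Ioo.mpr ⟨by linarith, hr0⟩) (by simpa using summable_zero)
      (Set.mem_Ioo.mpr (abs_lt.mp hlam))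
  · have hy' : |y| < r := abs_lt.mpr ⟨hy.1, hy.2⟩
    set A : ℝ := (n : ℝ) + 1 with hA
    have hA1 : (1:ℝ) ≤ A := le_add_of_nonneg_left (Nat.cast_nonneg n)
    have hd := denom_lb_s15 hr hy' n
    have hd0 := denom_pos_s15 hr hy' n
    set d : ℝ := (A * Real.pi) ^ 2 - y ^ 2 with hdd
    rw [← hA] at hd
    have habs : ‖-2 * y / d‖ = 2 * |y| / d := by
      rw [Real.norm_eq_abs, abs_div, abs_of_pos hd0, abs_mul]
      norm_num
    rw [habs, div_div, div_le_div_iff₀ (by positivity) (by positivity)]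
    have key2 := mul_le_mul_of_nonneg_right hy'.le
      (show (0:ℝ) ≤ 2 * (Real.pi ^ 2 - r ^ 2) * A ^ 2 by positivity)
    have key1 := mul_le_mul_of_nonneg_left hd (show (0:ℝ) ≤ 2 * r by positivity)
    nlinarith [key1, key2]

lemma sin_div_pos {x : ℝ} (hx : |x| < Real.pi) (hx0 : x ≠ 0) : 0 < Real.sin x / x := by
  rcases lt_or_gt_of_ne hx0 with h | h
  · have h1 : Real.sin (-x) > 0 :=
      Real.sin_pos_of_pos_of_lt_pi (by linarith) (by have := abs_lt.mp hx; linarith)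
    rw [Real.sin_neg] at h1
    exact div_pos_of_neg_of_neg (by linarith) h
  · exact div_pos (Real.sin_pos_of_pos_of_lt_pi h (by have := abs_lt.mp hx; linarith))
      h

lemma denom_pos' {x : ℝ} (hx : |x| < Real.pi) (n : ℕ) :
    ((( n : ℝ) + 1) ^ 2) * (Real.pi ^ 2 - x ^ 2) ≤ (((n : ℝ) + 1) * Real.pi) ^ 2 - x ^ 2 ∧
    0 < (((n : ℝ) + 1) * Real.pi) ^ 2 - x ^ 2 ∧
    0 < 1 - x ^ 2 / (((n : ℝ) + 1) * Real.pi) ^ 2 := by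
  have hpx : 0 < Real.pi ^ 2 - x ^ 2 := by
    have := abs_lt.mp hx; nlinarith [Real.pi_pos]
  have hA1 : (1:ℝ) ≤ (n : ℝ) + 1 := le_add_of_nonneg_left (Nat.cast_nonneg n)
  have hA2 : (1:ℝ) ≤ ((n : ℝ) + 1) ^ 2 := by nlinarith
  have hd : (((n : ℝ) + 1) ^ 2) * (Real.pi ^ 2 - x ^ 2) ≤ (((n : ℝ) + 1) * Real.pi) ^ 2 - x ^ 2 := by
    nlinarith [mul_le_mul_of_nonneg_right hA2 (sq_nonneg x)]
  have hd0 : 0 < (((n : ℝ) + 1) * Real.pi) ^ 2 - x ^ 2 := by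
    nlinarith [mul_le_mul_of_nonneg_right hA2 hpx.le]
  refine ⟨hd, hd0, ?_⟩
  have ht : 1 - x ^ 2 / (((n : ℝ) + 1) * Real.pi) ^ 2 =
      ((((n : ℝ) + 1) * Real.pi) ^ 2 - x ^ 2) / (((n : ℝ) + 1) * Real.pi) ^ 2 := by
    field_simp
  rw [ht]
  positivity

lemma summable_logterm {x : ℝ} (hx : |x| < Real.pi) :
    Summable (fun n : ℕ => Real.log (1 - x ^ 2 / (((n : ℝ) + 1) * Real.pi) ^ 2)) := by
  have hpx : 0 < Real.pi ^ 2 - x ^ 2 := by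
    have := abs_lt.mp hx; nlinarith [Real.pi_pos]
  have key : ∀ n : ℕ, -(Real.log (1 - x ^ 2 / (((n : ℝ) + 1) * Real.pi) ^ 2)) ≤
      (x ^ 2 / (Real.pi ^ 2 - x ^ 2)) / ((n : ℝ) + 1) ^ 2 := by
    intro n
    obtain ⟨hd, hd0, htpos⟩ := denom_pos' hx n
    have ht : 1 - x ^ 2 / (((n : ℝ) + 1) * Real.pi) ^ 2 =
        ((((n : ℝ) + 1) * Real.pi) ^ 2 - x ^ 2) / (((n : ℝ) + 1) * Real.pi) ^ 2 := by
      field_simp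
    have h1 : -(Real.log (1 - x ^ 2 / (((n : ℝ) + 1) * Real.pi) ^ 2)) ≤
        (1 - x ^ 2 / (((n : ℝ) + 1) * Real.pi) ^ 2)⁻¹ - 1 := by
      have h := Real.log_le_sub_one_of_pos (inv_pos.mpr htpos)
      rw [Real.log_inv] at h
      linarith
    have h2 : (1 - x ^ 2 / (((n : ℝ) + 1) * Real.pi) ^ 2)⁻¹ - 1 =
        x ^ 2 / ((((n : ℝ) + 1) * Real.pi) ^ 2 - x ^ 2) := by
      rw [ht]
      field_simp
      rw [div_sub_one (by rw [← mul_pow]; exact hd0.ne')]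
      ring
    rw [h2] at h1
    refine h1.trans ?_
    rw [div_div, div_le_div_iff₀ hd0 (by positivity)]
    nlinarith [mul_le_mul_of_nonneg_left hd (sq_nonneg x)]
  have hs : Summable (fun n : ℕ => -(Real.log (1 - x ^ 2 / (((n : ℝ) + 1) * Real.pi) ^ 2))) := by
    apply Summable.of_nonneg_of_le _ key (sumC _)
    intro n
    rw [neg_nonneg]
    apply Real.log_nonpos (denom_pos' hx n).2.2.le
    nlinarith [(denom_pos' hx n).2.2, sq_nonneg x,
      sq_nonneg (((n:ℝ)+1) * Real.pi), div_nonneg (sq_nonneg x) (sq_nonneg (((n:ℝ)+1) * Real.pi))]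
  simpa using hs.neg

lemma Gsum_eq {x : ℝ} (hx : |x| < Real.pi) (hx0 : x ≠ 0) :
    ∑' n : ℕ, Real.log (1 - x ^ 2 / (((n : ℝ) + 1) * Real.pi) ^ 2) =
      Real.log (Real.sin x / x) := by
  have hsum := summable_logterm hx
  have htend := hsum.hasSum.tendsto_sum_nat
  -- partial sums equal log of partial products
  have hps : ∀ n : ℕ, ∑ i ∈ Finset.range n, Real.log (1 - x ^ 2 / (((i : ℝ) + 1) * Real.pi) ^ 2)
      = Real.log (∏ i ∈ Finset.range n, (1 - x ^ 2 / (((i : ℝ) + 1) * Real.pi) ^ 2)) := by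
    intro n
    rw [Real.log_prod]
    intro i _
    exact ne_of_gt (denom_pos' hx i).2.2
  -- products tend to sin x / x
  have heuler := Real.tendsto_euler_sin_prod (x / Real.pi)
  have hpi := Real.pi_ne_zero
  have heq : ∀ n : ℕ, Real.pi * (x / Real.pi) *
      ∏ j ∈ Finset.range n, (1 - (x / Real.pi) ^ 2 / ((j : ℝ) + 1) ^ 2) =
      x * ∏ j ∈ Finset.range n, (1 - x ^ 2 / (((j : ℝ) + 1) * Real.pi) ^ 2) := by
    intro n
    rw [mul_div_cancel₀ _ hpi]
    congr 1
    apply Finset.prod_congr rfl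
    intro j _
    have : ((j : ℝ) + 1) ≠ 0 := by positivity
    field_simp
  rw [show Real.sin (Real.pi * (x / Real.pi)) = Real.sin x by rw [mul_div_cancel₀ _ hpi]] at heuler
  simp only [heq] at heuler
  have hprod : Filter.Tendsto
      (fun n => ∏ j ∈ Finset.range n, (1 - x ^ 2 / (((j : ℝ) + 1) * Real.pi) ^ 2))
      Filter.atTop (nhds (Real.sin x / x)) := by
    have := heuler.const_mul x⁻¹
    simp only [← mul_assoc, inv_mul_cancel₀ hx0, one_mul] at this
    simpa [div_eq_inv_mul] using this
  have hlog : Filter.Tendsto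
      (fun n => Real.log (∏ j ∈ Finset.range n, (1 - x ^ 2 / (((j : ℝ) + 1) * Real.pi) ^ 2)))
      Filter.atTop (nhds (Real.log (Real.sin x / x))) :=
    ((Real.continuousAt_log (ne_of_gt (sin_div_pos hx hx0))).tendsto).comp hprod
  refine tendsto_nhds_unique ?_ hlog
  simpa only [hps] using htend

lemma sin_ne_zero' {x : ℝ} (hx : |x| < Real.pi) (hx0 : x ≠ 0) : Real.sin x ≠ 0 := by
  intro h
  have := sin_div_pos hx hx0
  rw [h] at this
  simp at this

lemma Esum_eq {x : ℝ} (hx : |x| < Real.pi) (hx0 : x ≠ 0) :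
    ∑' n : ℕ, -2 * x / ((((n : ℝ) + 1) * Real.pi) ^ 2 - x ^ 2) =
      Real.cos x / Real.sin x - 1 / x := by
  set r : ℝ := (|x| + Real.pi) / 2 with hrdef
  have hr : r < Real.pi := by have := abs_lt.mp hx; simp [hrdef]; linarith
  have hxr : |x| < r := by simp [hrdef]; linarith
  have hG := key_hasDerivAt_G hr hxr
  have hsin := sin_ne_zero' hx hx0
  -- derivative of log (sin y / y)
  have hψ : HasDerivAt (fun y : ℝ => Real.log (Real.sin y / y))
      (Real.cos x / Real.sin x - 1 / x) x := by
    have h1 : HasDerivAt (fun y : ℝ => Real.sin y / y)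
        ((Real.cos x * x - Real.sin x * 1) / x ^ 2) x :=
      (Real.hasDerivAt_sin x).div (hasDerivAt_id x) hx0
    have h2 := h1.log (ne_of_gt (sin_div_pos hx hx0))
    convert h2 using 1
    field_simp
  -- G agrees with log (sin y / y) near x
  have hU : IsOpen {y : ℝ | |y| < Real.pi ∧ y ≠ 0} :=
    (isOpen_lt continuous_abs continuous_const).inter isOpen_ne
  have hmem : x ∈ {y : ℝ | |y| < Real.pi ∧ y ≠ 0} := ⟨hx, hx0⟩
  have hev : (fun y : ℝ => ∑' n : ℕ, Real.log (1 - y ^ 2 / (((n : ℝ) + 1) * Real.pi) ^ 2))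
      =ᶠ[nhds x] (fun y : ℝ => Real.log (Real.sin y / y)) := by
    filter_upwards [hU.mem_nhds hmem] with y hy
    exact Gsum_eq hy.1 hy.2
  have hG' : HasDerivAt (fun y : ℝ => ∑' n : ℕ,
      Real.log (1 - y ^ 2 / (((n : ℝ) + 1) * Real.pi) ^ 2))
      (Real.cos x / Real.sin x - 1 / x) x := hψ.congr_of_eventuallyEq hev
  exact hG.unique hG'

lemma Hsum_eq {x : ℝ} (hx : |x| < Real.pi) :
    ∑' n : ℕ, 2 * x ^ 2 / ((((n : ℝ) + 1) * Real.pi) ^ 2 - x ^ 2) =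
      if x = 0 then 0 else 1 - x * Real.cot x := by
  rcases eq_or_ne x 0 with rfl | hx0
  · simp
  · rw [if_neg hx0]
    have h1 : ∀ n : ℕ, 2 * x ^ 2 / ((((n : ℝ) + 1) * Real.pi) ^ 2 - x ^ 2) =
        (-x) * (-2 * x / ((((n : ℝ) + 1) * Real.pi) ^ 2 - x ^ 2)) := by
      intro n; ring
    rw [tsum_congr h1, tsum_mul_left, Esum_eq hx hx0, Real.cot_eq_cos_div_sin]
    field_simp
    ring

lemma termwise (c lam : ℝ) (hc : 0 < c) (h1 : c - lam ≠ 0) (h2 : c + lam ≠ 0) :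
    (1 / c) * (((1 - lam / c) ^ 2)⁻¹ - ((1 + lam / c) ^ 2)⁻¹) =
      4 * lam * c ^ 2 / (c ^ 2 - lam ^ 2) ^ 2 := by
  have e1 : 1 - lam / c = (c - lam) / c := by field_simp
  have e2 : 1 + lam / c = (c + lam) / c := by field_simp
  have e3 : c ^ 2 - lam ^ 2 = (c - lam) * (c + lam) := by ring
  rw [e1, e2, e3, div_pow, div_pow, inv_div, inv_div]
  field_simp
  ring

theorem statement15
    (f : ℝ → ℝ) (hf : ∀ s, f s = if s = 0 then 0 else 1 - s * Real.cot s)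
    (lam : ℝ) (hlam : lam ∈ Set.Ioo (-Real.pi) Real.pi) :
    ∑' j : ℕ+, (1 / ((j : ℝ) * Real.pi)) *
        (((1 - lam / ((j : ℝ) * Real.pi)) ^ 2)⁻¹ - ((1 + lam / ((j : ℝ) * Real.pi)) ^ 2)⁻¹) =
      deriv f lam ∧
    deriv f lam = if lam = 0 then 0
      else (2 * lam - Real.sin (2 * lam)) / (2 * Real.sin lam ^ 2) := by
  have hlam' : |lam| < Real.pi := abs_lt.mpr ⟨hlam.1, hlam.2⟩
  set r : ℝ := (|lam| + Real.pi) / 2 with hrdef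
  have hr : r < Real.pi := by simp only [hrdef]; linarith
  have hxr : |lam| < r := by simp only [hrdef]; linarith [abs_nonneg lam]
  have hH := key_hasDerivAt_H hr hxr
  -- f agrees with the H series near lam
  have hev : f =ᶠ[nhds lam]
      (fun x : ℝ => ∑' n : ℕ, 2 * x ^ 2 / ((((n : ℝ) + 1) * Real.pi) ^ 2 - x ^ 2)) := by
    filter_upwards [isOpen_Ioo.mem_nhds (Set.mem_Ioo.mpr ⟨hlam.1, hlam.2⟩)] with y hy
    rw [hf y, ← Hsum_eq (abs_lt.mpr ⟨hy.1, hy.2⟩)]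
  have hderiv : deriv f lam = ∑' n : ℕ, 4 * lam * (((n : ℝ) + 1) * Real.pi) ^ 2 /
      ((((n : ℝ) + 1) * Real.pi) ^ 2 - lam ^ 2) ^ 2 := by
    rw [hev.deriv_eq, hH.deriv]
  constructor
  · -- convert the PNat sum to the Nat sum
    rw [hderiv]
    rw [← Equiv.tsum_eq (Equiv.pnatEquivNat.symm)
      (fun j : ℕ+ => (1 / ((j : ℝ) * Real.pi)) *
        (((1 - lam / ((j : ℝ) * Real.pi)) ^ 2)⁻¹ - ((1 + lam / ((j : ℝ) * Real.pi)) ^ 2)⁻¹))]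
    apply tsum_congr
    intro n
    have hcast : ((Equiv.pnatEquivNat.symm n : ℕ+) : ℝ) = (n : ℝ) + 1 := by
      have h : ((Equiv.pnatEquivNat.symm n : ℕ+) : ℕ) = n + 1 := rfl
      exact_mod_cast congrArg (Nat.cast (R := ℝ)) h
    simp only [hcast]
    have hA1 : (1:ℝ) ≤ (n : ℝ) + 1 := le_add_of_nonneg_left (Nat.cast_nonneg n)
    have hc : ((n : ℝ) + 1) * Real.pi ≠ 0 := by positivity
    have hcge : Real.pi ≤ ((n : ℝ) + 1) * Real.pi :=
      le_mul_of_one_le_left Real.pi_pos.le hA1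
    have hcpos : 0 < ((n : ℝ) + 1) * Real.pi := by positivity
    have hlt := abs_lt.mp hlam'
    have h1 : ((n : ℝ) + 1) * Real.pi - lam ≠ 0 := by linarith
    have h2 : ((n : ℝ) + 1) * Real.pi + lam ≠ 0 := by
      intro h; linarith
    rw [termwise _ _ hcpos h1 h2]
  · rcases eq_or_ne lam 0 with rfl | hlam0
    · rw [if_pos rfl, hderiv]
      simp
    · rw [if_neg hlam0]
      have hsin := sin_ne_zero' hlam' hlam0
      have hev2 : f =ᶠ[nhds lam]
          (fun x : ℝ => 1 - x * (Real.cos x / Real.sin x)) := by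
        filter_upwards [isOpen_ne.mem_nhds hlam0] with y hy
        rw [hf y, if_neg hy, Real.cot_eq_cos_div_sin]
      rw [hev2.deriv_eq]
      have h1 : HasDerivAt (fun x : ℝ => Real.cos x / Real.sin x)
          ((-Real.sin lam * Real.sin lam - Real.cos lam * Real.cos lam) / Real.sin lam ^ 2)
          lam := (Real.hasDerivAt_cos lam).div (Real.hasDerivAt_sin lam) hsin
      have h2 : HasDerivAt (fun x : ℝ => 1 - x * (Real.cos x / Real.sin x))
          (-(1 * (Real.cos lam / Real.sin lam) + lam *
            ((-Real.sin lam * Real.sin lam - Real.cos lam * Real.cos lam) / Real.sin lam ^ 2)))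
          lam := ((hasDerivAt_id lam).mul h1).const_sub 1
      rw [h2.deriv]
      have hpyth := Real.sin_sq_add_cos_sq lam
      rw [show -Real.sin lam * Real.sin lam - Real.cos lam * Real.cos lam = -1 from by
        linear_combination -hpyth, Real.sin_two_mul]
      field_simp
      ring
end

section
/- Let ϑ₁ ∈ (π, 3π/2) satisfy tan ϑ₁ = ϑ₁, and let ψ(r) = (1 − r cot r)/r². For v = (v₁, v₂) with v₂ < 0, π < v₁ < r := |v| < ϑ₁ and K₃ := 2ψ(r) + (ψ'(r)/r)·v₂² < 0, set K₁ = ψ'(r)/r, K₂ = r^{−1}(ψ'(r)/r)'. Then K := 2ψ(r)K₁ + v₁²·(2ψ(r)K₂ − 4K₁²) + v₂²·K₁·(5K₁ + K₂r²) < 0. -/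
open Real

set_option maxHeartbeats 1000000

lemma myHasDerivAt_cot {x : ℝ} (hx : Real.sin x ≠ 0) :
    HasDerivAt Real.cot (-(1 + Real.cot x ^ 2)) x := by
  have h := (Real.hasDerivAt_cos x).div (Real.hasDerivAt_sin x) hx
  have hc : Real.cot = fun y => Real.cos y / Real.sin y := funext Real.cot_eq_cos_div_sin
  rw [hc]
  refine h.congr_deriv ?_
  simp only [Real.cot_eq_cos_div_sin]
  have h2 := Real.sin_sq_add_cos_sq x
  field_simp
  nlinarith [h2]

lemma sin_neg_on' (x : ℝ) (h1 : Real.pi < x) (h2 : x < 3 * Real.pi / 2) : Real.sin x < 0 := by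
  have h3 : Real.sin (x - Real.pi) = -Real.sin x := Real.sin_sub_pi x
  have h4 : 0 < Real.sin (x - Real.pi) :=
    Real.sin_pos_of_pos_of_lt_pi (by linarith) (by linarith [Real.pi_pos])
  linarith

lemma hasDerivAt_psi (ψ : ℝ → ℝ) (hψ : ∀ s, ψ s = (1 - s * Real.cot s) / s ^ 2)
    {x : ℝ} (hx0 : x ≠ 0) (hx : Real.sin x ≠ 0) :
    HasDerivAt ψ ((x^2 + x * Real.cot x + x^2 * Real.cot x ^ 2 - 2) / x^3) x := by
  have hf : ψ = fun y => (1 - y * Real.cot y) / y ^ 2 := funext hψ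
  rw [hf]
  have hnum : HasDerivAt (fun y => 1 - y * Real.cot y)
      (-(1 * Real.cot x + x * (-(1 + Real.cot x ^ 2)))) x :=
    ((hasDerivAt_id x).mul (myHasDerivAt_cot hx)).const_sub 1
  have hden : HasDerivAt (fun y : ℝ => y ^ 2) (2 * x ^ 1) x := hasDerivAt_pow 2 x
  have h := hnum.div hden (pow_ne_zero 2 hx0)
  refine h.congr_deriv ?_
  field_simp
  ring

lemma hasDerivAt_K1fun {x : ℝ} (hx0 : x ≠ 0) (hx : Real.sin x ≠ 0) :
    HasDerivAt (fun y => (y^2 + y * Real.cot y + y^2 * Real.cot y ^ 2 - 2) / y^4)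
      ((8 - 3*x*Real.cot x - 3*x^2 - 3*x^2*Real.cot x^2 - 2*x^3*Real.cot x
        - 2*x^3*Real.cot x^3) / x^5) x := by
  have h1 : HasDerivAt (fun y : ℝ => y ^ 2) (2 * x ^ 1) x := hasDerivAt_pow 2 x
  have h2 : HasDerivAt (fun y => y * Real.cot y)
      (1 * Real.cot x + x * (-(1 + Real.cot x ^ 2))) x :=
    (hasDerivAt_id x).mul (myHasDerivAt_cot hx)
  have h3 : HasDerivAt (fun y => y^2 * Real.cot y ^ 2)
      (2 * x ^ 1 * Real.cot x ^ 2 + x ^ 2 * (2 * Real.cot x ^ 1 * (-(1 + Real.cot x ^ 2)))) x :=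
    h1.mul ((myHasDerivAt_cot hx).pow 2)
  have hnum : HasDerivAt (fun y => y^2 + y * Real.cot y + y^2 * Real.cot y ^ 2 - 2)
      (2 * x ^ 1 + (1 * Real.cot x + x * (-(1 + Real.cot x ^ 2)))
        + (2 * x ^ 1 * Real.cot x ^ 2 + x ^ 2 * (2 * Real.cot x ^ 1 * (-(1 + Real.cot x ^ 2))))) x :=
    ((h1.add h2).add h3).sub_const 2
  have hden : HasDerivAt (fun y : ℝ => y ^ 4) (4 * x ^ 3) x := hasDerivAt_pow 4 x
  have h := hnum.div hden (pow_ne_zero 4 hx0)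
  refine h.congr_deriv ?_
  field_simp
  ring

lemma sin_sub_mul_cos_pos_s17 (ϑ₁ : ℝ) (hϑl : Real.pi < ϑ₁) (hϑu : ϑ₁ < 3 * Real.pi / 2)
    (htan : Real.tan ϑ₁ = ϑ₁) (r : ℝ) (hrπ : Real.pi < r) (hrϑ : r < ϑ₁) :
    0 < Real.sin r - r * Real.cos r := by
  have hπ := Real.pi_pos
  have hg : ∀ x : ℝ, HasDerivAt (fun y => Real.sin y - y * Real.cos y) (x * Real.sin x) x := by
    intro x
    have h := (Real.hasDerivAt_sin x).sub ((hasDerivAt_id x).mul (Real.hasDerivAt_cos x))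
    simp only [id_eq] at h
    refine h.congr_deriv ?_
    ring
  have hanti : StrictAntiOn (fun y => Real.sin y - y * Real.cos y)
      (Set.Icc Real.pi (3 * Real.pi / 2)) := by
    apply strictAntiOn_of_deriv_neg (convex_Icc _ _)
    · exact (Real.continuous_sin.sub (continuous_id.mul Real.continuous_cos)).continuousOn
    · intro x hx
      rw [interior_Icc] at hx
      rw [(hg x).deriv]
      have := sin_neg_on' x hx.1 hx.2
      nlinarith [hx.1, hπ]
  have hϑval : Real.sin ϑ₁ - ϑ₁ * Real.cos ϑ₁ = 0 := by
    have hcos : Real.cos ϑ₁ ≠ 0 := by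
      intro h
      rw [Real.tan_eq_sin_div_cos, h, div_zero] at htan
      linarith [htan ▸ hϑl]
    have := Real.tan_eq_sin_div_cos ϑ₁
    rw [htan] at this
    field_simp at this
    linarith [this]
  have := hanti (Set.mem_Icc.2 ⟨le_of_lt hrπ, by linarith⟩)
    (Set.mem_Icc.2 ⟨le_of_lt hϑl, le_of_lt hϑu⟩) hrϑ
  simp only at this
  linarith [hϑval, this]

lemma main_ineq (t s w u : ℝ) (ht1 : 1 < t) (hs9 : 9 < s) (hw : 0 < w)
    (hu : u = s - w)
    (hK3 : 2*((1-t)/s) + ((s+t+t^2-2)/s^2)*w < 0) :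
    2*((1-t)/s)*((s+t+t^2-2)/s^2)
      + u*(2*((1-t)/s)*((8-3*t-3*s-3*t^2-2*s*t-2*t^3)/s^3) - 4*((s+t+t^2-2)/s^2)^2)
      + w*((s+t+t^2-2)/s^2)*(5*((s+t+t^2-2)/s^2) + ((8-3*t-3*s-3*t^2-2*s*t-2*t^3)/s^3)*s) < 0 := by
  have hs0 : (0:ℝ) < s := by linarith
  obtain ⟨A, hA⟩ : ∃ A : ℝ, A = 1 - t := ⟨_, rfl⟩
  obtain ⟨B, hB⟩ : ∃ B : ℝ, B = s + t + t^2 - 2 := ⟨_, rfl⟩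
  obtain ⟨C, hC⟩ : ∃ C : ℝ, C = 8 - 3*t - 3*s - 3*t^2 - 2*s*t - 2*t^3 := ⟨_, rfl⟩
  rw [show (1:ℝ) - t = A from hA.symm, show s + t + t^2 - 2 = B from hB.symm,
    show 8 - 3*t - 3*s - 3*t^2 - 2*s*t - 2*t^3 = C from hC.symm]
  rw [show (1:ℝ) - t = A from hA.symm, show s + t + t^2 - 2 = B from hB.symm] at hK3
  have hApos : A < 0 := by rw [hA]; linarith
  have hBpos : 0 < B := by rw [hB]; nlinarith
  have hCneg : C < 0 := by rw [hC]; nlinarith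
  have hK3' : w * B < 2*s*(t-1) := by
    have hmul := mul_neg_of_pos_of_neg (mul_pos hs0 hs0) hK3
    have h2 : s*s*(2*(A/s) + B/s^2*w) = 2*s*A + w*B := by field_simp
    rw [h2] at hmul
    rw [hA] at hmul
    linarith
  have key : 2*(A/s)*(B/s^2)
      + u*(2*(A/s)*(C/s^3) - 4*(B/s^2)^2)
      + w*(B/s^2)*(5*(B/s^2) + C/s^3*s)
      = (2*A*B*s + 2*A*C*s - 4*B^2*s + w*(9*B^2 + B*C - 2*A*C)) / s^4 := by
    rw [hu]; field_simp; ring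
  rw [key]
  apply div_neg_of_neg_of_pos _ (by positivity)
  have hABC : A*B + A*C - 2*B^2 < 0 := by
    rw [hA, hB, hC]
    nlinarith [sq_nonneg (t-1), sq_nonneg t, mul_pos (sub_pos.2 ht1) (sub_pos.2 ht1)]
  rcases le_or_gt (9*B^2 + B*C - 2*A*C) 0 with hM | hM
  · nlinarith [mul_nonneg hw.le (neg_nonneg.2 hM), mul_neg_of_pos_of_neg hs0 hABC]
  · have h1 : w*B*(9*B^2 + B*C - 2*A*C) < 2*s*(t-1)*(9*B^2 + B*C - 2*A*C) :=
      mul_lt_mul_of_pos_right hK3' hM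
    have h3 : B^2*(-4*A-B) + A^2*C < 0 := by
      have h4 : 0 < s + t^2 - 3*t + 2 := by nlinarith [sq_nonneg (t - 3/2)]
      have h5 : -4*A - B = -(s + t^2 - 3*t + 2) := by rw [hA, hB]; ring
      have hA2 : 0 < A^2 := by nlinarith
      have p1 : B^2*(-4*A-B) < 0 := by
        rw [h5]
        have := mul_pos (mul_pos hBpos hBpos) h4
        nlinarith
      have p2 : A^2*C < 0 := mul_neg_of_pos_of_neg hA2 hCneg
      linarith
    have h2 : (2*A*B*s + 2*A*C*s - 4*B^2*s)*B + 2*s*(t-1)*(9*B^2 + B*C - 2*A*C)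
        = 4*s*(B^2*(-4*A-B) + A^2*C) := by rw [hA]; ring
    have h7 : 4*s*(B^2*(-4*A-B) + A^2*C) < 0 :=
      mul_neg_of_pos_of_neg (by linarith) h3
    have h6 : (2*A*B*s + 2*A*C*s - 4*B^2*s + w*(9*B^2 + B*C - 2*A*C)) * B < 0 := by
      nlinarith [h1, h2, h7]
    by_contra hcon
    push_neg at hcon
    nlinarith [mul_nonneg hcon hBpos.le]

theorem statement17
    (ψ : ℝ → ℝ) (hψ : ∀ s, ψ s = (1 - s * Real.cot s) / s ^ 2)
    (ϑ₁ : ℝ) (hϑ₁ : ϑ₁ ∈ Set.Ioo Real.pi (3 * Real.pi / 2)) (htan : Real.tan ϑ₁ = ϑ₁)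
    (v₁ v₂ r : ℝ) (hr : r = Real.sqrt (v₁ ^ 2 + v₂ ^ 2))
    (hv₂ : v₂ < 0) (hv₁ : Real.pi < v₁) (hv₁r : v₁ < r) (hrϑ : r < ϑ₁)
    (K₁ K₂ K₃ : ℝ)
    (hK₁ : K₁ = deriv ψ r / r)
    (hK₂ : K₂ = deriv (fun x => deriv ψ x / x) r / r)
    (hK₃ : K₃ = 2 * ψ r + (deriv ψ r / r) * v₂ ^ 2)
    (hK₃neg : K₃ < 0) :
    2 * ψ r * K₁ + v₁ ^ 2 * (2 * ψ r * K₂ - 4 * K₁ ^ 2) +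
      v₂ ^ 2 * K₁ * (5 * K₁ + K₂ * r ^ 2) < 0 := by
  obtain ⟨hϑl, hϑu⟩ := hϑ₁
  have hπ := Real.pi_pos
  have hπ3 := Real.pi_gt_three
  have hrπ : Real.pi < r := lt_trans hv₁ hv₁r
  have hr0 : 0 < r := lt_trans hπ hrπ
  have hrne : r ≠ 0 := ne_of_gt hr0
  have hr32 : r < 3 * Real.pi / 2 := lt_trans hrϑ hϑu
  have hsinr : Real.sin r < 0 := sin_neg_on' r hrπ hr32
  have hsne : Real.sin r ≠ 0 := ne_of_lt hsinr
  -- t > 1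
  have hg := sin_sub_mul_cos_pos_s17 ϑ₁ hϑl hϑu htan r hrπ hrϑ
  have ht1 : 1 < r * Real.cot r := by
    have he : r * Real.cot r - 1 = (r * Real.cos r - Real.sin r) / Real.sin r := by
      rw [Real.cot_eq_cos_div_sin]
      field_simp
    have hd : 0 < (r * Real.cos r - Real.sin r) / Real.sin r :=
      div_pos_iff.2 (Or.inr ⟨by linarith, hsinr⟩)
    linarith [he ▸ hd]
  have hs9 : (9:ℝ) < r ^ 2 := by nlinarith
  have hw : 0 < v₂ ^ 2 := by nlinarith [mul_pos_of_neg_of_neg hv₂ hv₂]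
  have hu : v₁ ^ 2 = r ^ 2 - v₂ ^ 2 := by
    have h := Real.sq_sqrt (show (0:ℝ) ≤ v₁ ^ 2 + v₂ ^ 2 by positivity)
    rw [hr]
    linarith [h]
  -- derivative values
  have hderivψ : ∀ x ∈ Set.Ioo Real.pi (3 * Real.pi / 2),
      deriv ψ x = (x^2 + x * Real.cot x + x^2 * Real.cot x ^ 2 - 2) / x^3 := by
    intro x hx
    exact (hasDerivAt_psi ψ hψ (ne_of_gt (lt_trans hπ hx.1))
      (ne_of_lt (sin_neg_on' x hx.1 hx.2))).deriv
  have hK1' : deriv ψ r = (r^2 + r * Real.cot r + r^2 * Real.cot r ^ 2 - 2) / r^3 :=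
    hderivψ r ⟨hrπ, hr32⟩
  have hev : (fun x => deriv ψ x / x) =ᶠ[nhds r]
      (fun x => (x^2 + x * Real.cot x + x^2 * Real.cot x ^ 2 - 2) / x^4) := by
    filter_upwards [isOpen_Ioo.mem_nhds (⟨hrπ, hr32⟩ : r ∈ Set.Ioo Real.pi (3 * Real.pi / 2))]
      with x hx
    have hx0 : x ≠ 0 := ne_of_gt (lt_trans hπ hx.1)
    rw [hderivψ x hx, div_div]
    ring_nf
  have hK2' : deriv (fun x => deriv ψ x / x) r
      = (8 - 3*r*Real.cot r - 3*r^2 - 3*r^2*Real.cot r^2 - 2*r^3*Real.cot r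
        - 2*r^3*Real.cot r^3) / r^5 := by
    rw [hev.deriv_eq]
    exact (hasDerivAt_K1fun hrne hsne).deriv
  -- K3 in normalized form
  rw [hK₃] at hK₃neg
  have hk3form : 2*((1 - r*Real.cot r)/r^2)
      + ((r^2 + r*Real.cot r + (r*Real.cot r)^2 - 2)/(r^2)^2)*v₂^2 < 0 := by
    have e : 2*((1 - r*Real.cot r)/r^2)
        + ((r^2 + r*Real.cot r + (r*Real.cot r)^2 - 2)/(r^2)^2)*v₂^2
        = 2 * ψ r + (deriv ψ r / r) * v₂ ^ 2 := by
      rw [hψ r, hK1']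
      field_simp
    rw [e]
    exact hK₃neg
  have h := main_ineq (r * Real.cot r) (r^2) (v₂^2) (v₁^2) ht1 hs9 hw hu hk3form
  have geq : 2 * ψ r * K₁ + v₁ ^ 2 * (2 * ψ r * K₂ - 4 * K₁ ^ 2) +
      v₂ ^ 2 * K₁ * (5 * K₁ + K₂ * r ^ 2)
      = 2*((1-(r*Real.cot r))/r^2)*((r^2+(r*Real.cot r)+(r*Real.cot r)^2-2)/(r^2)^2)
      + v₁^2*(2*((1-(r*Real.cot r))/r^2)*((8-3*(r*Real.cot r)-3*r^2-3*(r*Real.cot r)^2-2*r^2*(r*Real.cot r)-2*(r*Real.cot r)^3)/(r^2)^3) - 4*((r^2+(r*Real.cot r)+(r*Real.cot r)^2-2)/(r^2)^2)^2)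
      + v₂^2*((r^2+(r*Real.cot r)+(r*Real.cot r)^2-2)/(r^2)^2)*(5*((r^2+(r*Real.cot r)+(r*Real.cot r)^2-2)/(r^2)^2) + ((8-3*(r*Real.cot r)-3*r^2-3*(r*Real.cot r)^2-2*r^2*(r*Real.cot r)-2*(r*Real.cot r)^3)/(r^2)^3)*r^2) := by
    rw [hK₁, hK₂, hK1', hK2', hψ r]
    field_simp
  rw [geq]
  exact h
end

section
/- Let ψ(r) = (1 − r cot r)/r² on (0, π) with ψ(0) = 1/3. Define Λ : Ω₊ → ℝ², Λ(v₁, v₂) = v₂·[ (ψ'(r)/r)·v₂·(v₁, v₂) + 2ψ(r)·(0,1) ] with r = |(v₁,v₂)|, on Ω₊ = {(v₁, v₂) : v₂ > 0, v₁² + v₂² < π²}. Then every value Λ(v) = (u₁, u₂) satisfies u₂ > (2/√π)·√|u₁|; i.e. Λ maps Ω₊ into ℝ²_> = {(u₁,u₂) : u₂ > (2/√π)√|u₁|}. -/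
open Real

lemma auxA18 : ∀ x ∈ Set.Ioo (0:ℝ) π, 0 < Real.sin x - x * Real.cos x := by
  have hm : StrictMonoOn (fun t : ℝ => Real.sin t - t * Real.cos t) (Set.Icc 0 π) := by
    apply strictMonoOn_of_deriv_pos (convex_Icc 0 π)
    · fun_prop
    · intro t ht
      rw [interior_Icc] at ht
      have hd : HasDerivAt (fun t : ℝ => Real.sin t - t * Real.cos t) (t * Real.sin t) t := by
        have := (Real.hasDerivAt_sin t).sub ((hasDerivAt_id t).mul (Real.hasDerivAt_cos t))
        refine this.congr_deriv ?_; simp [mul_comm]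
      rw [hd.deriv]
      exact mul_pos ht.1 (Real.sin_pos_of_pos_of_lt_pi ht.1 ht.2)
  intro x hx
  have := hm (Set.left_mem_Icc.2 Real.pi_pos.le) (Set.mem_Icc.2 ⟨hx.1.le, hx.2.le⟩) hx.1
  simpa using this

lemma auxB18 : ∀ x ∈ Set.Ioo (0:ℝ) π,
    0 < 3 * (Real.sin x - x * Real.cos x) - x ^ 2 * Real.sin x := by
  have hm : StrictMonoOn (fun t : ℝ => 3 * (Real.sin t - t * Real.cos t) - t ^ 2 * Real.sin t)
      (Set.Icc 0 π) := by
    apply strictMonoOn_of_deriv_pos (convex_Icc 0 π)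
    · fun_prop
    · intro t ht
      rw [interior_Icc] at ht
      have hd : HasDerivAt (fun t : ℝ => 3 * (Real.sin t - t * Real.cos t) - t ^ 2 * Real.sin t)
          (t * (Real.sin t - t * Real.cos t)) t := by
        have := (((Real.hasDerivAt_sin t).sub ((hasDerivAt_id t).mul
          (Real.hasDerivAt_cos t))).const_mul 3).sub
          ((hasDerivAt_pow 2 t).mul (Real.hasDerivAt_sin t))
        refine this.congr_deriv ?_; simp; ring
      rw [hd.deriv]
      exact mul_pos ht.1 (auxA18 t ht)
  intro x hx
  have := hm (Set.left_mem_Icc.2 Real.pi_pos.le) (Set.mem_Icc.2 ⟨hx.1.le, hx.2.le⟩) hx.1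
  simpa using this

lemma auxC218 : ∀ u ∈ Set.Icc (0:ℝ) (2*π), 0 ≤ 2 - 2 * Real.cos u - u * Real.sin u := by
  have hd : ∀ t : ℝ, HasDerivAt (fun u : ℝ => 2 - 2 * Real.cos u - u * Real.sin u)
      (Real.sin t - t * Real.cos t) t := by
    intro t
    have := (((Real.hasDerivAt_cos t).const_mul 2).const_sub 2).sub
      ((hasDerivAt_id t).mul (Real.hasDerivAt_sin t))
    refine this.congr_deriv ?_; simp; ring
  intro u hu
  rcases le_or_gt u π with h | h
  · have hm : MonotoneOn (fun u : ℝ => 2 - 2 * Real.cos u - u * Real.sin u) (Set.Icc 0 π) := by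
      apply monotoneOn_of_deriv_nonneg (convex_Icc 0 π)
      · fun_prop
      · intro t ht; exact (hd t).differentiableAt.differentiableWithinAt
      · intro t ht
        rw [interior_Icc] at ht
        rw [(hd t).deriv]
        exact (auxA18 t ht).le
    have := hm (Set.left_mem_Icc.2 Real.pi_pos.le) (Set.mem_Icc.2 ⟨hu.1, h⟩) hu.1
    simpa using this
  · have hs : Real.sin u ≤ 0 := by
      have h1 : Real.sin (u - π) = -Real.sin u := Real.sin_sub_pi u
      have h2 : 0 ≤ Real.sin (u - π) :=
        Real.sin_nonneg_of_nonneg_of_le_pi (by linarith) (by linarith [hu.2])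
      linarith
    have hc : Real.cos u ≤ 1 := Real.cos_le_one u
    nlinarith [hu.1]

lemma auxC118 : ∀ u ∈ Set.Icc (0:ℝ) (2*π),
    0 ≤ 2 * u - 3 * Real.sin u + u * Real.cos u := by
  have hd : ∀ t : ℝ, HasDerivAt (fun u : ℝ => 2 * u - 3 * Real.sin u + u * Real.cos u)
      (2 - 2 * Real.cos t - t * Real.sin t) t := by
    intro t
    have := (((hasDerivAt_id t).const_mul 2).sub ((Real.hasDerivAt_sin t).const_mul 3)).add
      ((hasDerivAt_id t).mul (Real.hasDerivAt_cos t))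
    refine this.congr_deriv ?_; simp; ring
  have hm : MonotoneOn (fun u : ℝ => 2 * u - 3 * Real.sin u + u * Real.cos u)
      (Set.Icc 0 (2*π)) := by
    apply monotoneOn_of_deriv_nonneg (convex_Icc 0 (2*π))
    · fun_prop
    · intro t ht; exact (hd t).differentiableAt.differentiableWithinAt
    · intro t ht
      rw [interior_Icc] at ht
      rw [(hd t).deriv]
      exact auxC218 t ⟨ht.1.le, ht.2.le⟩
  intro u hu
  have := hm (Set.left_mem_Icc.2 (by positivity)) hu hu.1
  simpa using this

lemma auxC18 : ∀ u ∈ Set.Icc (0:ℝ) (2*π),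
    0 ≤ u ^ 2 + u * Real.sin u + 4 * Real.cos u - 4 := by
  have hd : ∀ t : ℝ, HasDerivAt (fun u : ℝ => u ^ 2 + u * Real.sin u + 4 * Real.cos u - 4)
      (2 * t - 3 * Real.sin t + t * Real.cos t) t := by
    intro t
    have := (((hasDerivAt_pow 2 t).add ((hasDerivAt_id t).mul (Real.hasDerivAt_sin t))).add
      ((Real.hasDerivAt_cos t).const_mul 4)).sub_const 4
    refine this.congr_deriv ?_; simp; ring
  have hm : MonotoneOn (fun u : ℝ => u ^ 2 + u * Real.sin u + 4 * Real.cos u - 4)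
      (Set.Icc 0 (2*π)) := by
    apply monotoneOn_of_deriv_nonneg (convex_Icc 0 (2*π))
    · fun_prop
    · intro t ht; exact (hd t).differentiableAt.differentiableWithinAt
    · intro t ht
      rw [interior_Icc] at ht
      rw [(hd t).deriv]
      exact auxC118 t ⟨ht.1.le, ht.2.le⟩
  intro u hu
  have := hm (Set.left_mem_Icc.2 (by positivity)) hu hu.1
  simpa using this

theorem statement18
    (ψ : ℝ → ℝ)
    (hψ : ∀ s, ψ s = if s = 0 then 1/3 else (1 - s * Real.cot s) / s ^ 2)
    (Λ : ℝ × ℝ → ℝ × ℝ)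
    (hΛ : ∀ v : ℝ × ℝ,
      Λ v = (v.2 * ((deriv ψ (Real.sqrt (v.1 ^ 2 + v.2 ^ 2)) /
                Real.sqrt (v.1 ^ 2 + v.2 ^ 2)) * v.2 * v.1),
             v.2 * ((deriv ψ (Real.sqrt (v.1 ^ 2 + v.2 ^ 2)) /
                Real.sqrt (v.1 ^ 2 + v.2 ^ 2)) * v.2 * v.2 +
                2 * ψ (Real.sqrt (v.1 ^ 2 + v.2 ^ 2)))))
    (v : ℝ × ℝ) (hv₂ : 0 < v.2) (hball : v.1 ^ 2 + v.2 ^ 2 < Real.pi ^ 2) :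
    (Λ v).2 > (2 / Real.sqrt Real.pi) * Real.sqrt |(Λ v).1| := by
  set P := v.1 with hP
  set Q := v.2 with hQ
  set s := Real.sqrt (P ^ 2 + Q ^ 2) with hs
  have hsq : s ^ 2 = P ^ 2 + Q ^ 2 := Real.sq_sqrt (by positivity)
  have hs0 : 0 < s := Real.sqrt_pos.2 (by positivity)
  have hsπ : s < π := by
    rw [hs]
    exact (Real.sqrt_lt' Real.pi_pos).2 hball
  have hsin : 0 < Real.sin s := Real.sin_pos_of_pos_of_lt_pi hs0 hsπ
  have hsne : Real.sin s ≠ 0 := hsin.ne'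
  have hs0' : s ≠ 0 := hs0.ne'
  have hcot : ∀ x : ℝ, x ≠ 0 → ψ x = (1 - x * Real.cos x / Real.sin x) / x ^ 2 := by
    intro x hx
    rw [hψ, if_neg hx, Real.cot_eq_cos_div_sin, mul_div_assoc]
  -- derivative formula
  have h1 : HasDerivAt (fun x : ℝ => x * Real.cos x) (Real.cos s - s * Real.sin s) s := by
    have := (hasDerivAt_id s).mul (Real.hasDerivAt_cos s)
    refine this.congr_deriv ?_; simp; ring
  have h2 : HasDerivAt (fun x : ℝ => x * Real.cos x / Real.sin x)
      (((Real.cos s - s * Real.sin s) * Real.sin s - (s * Real.cos s) * Real.cos s) /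
        Real.sin s ^ 2) s := h1.div (Real.hasDerivAt_sin s) hsne
  have h3 : HasDerivAt (fun x : ℝ => 1 - x * Real.cos x / Real.sin x)
      (-(((Real.cos s - s * Real.sin s) * Real.sin s - (s * Real.cos s) * Real.cos s) /
        Real.sin s ^ 2)) s := h2.const_sub 1
  have h4 : HasDerivAt (fun x : ℝ => (1 - x * Real.cos x / Real.sin x) / x ^ 2)
      ((-(((Real.cos s - s * Real.sin s) * Real.sin s - (s * Real.cos s) * Real.cos s) /
          Real.sin s ^ 2) * s ^ 2 -
        (1 - s * Real.cos s / Real.sin s) * (2 * s ^ 1)) / (s ^ 2) ^ 2) s :=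
    h3.div (hasDerivAt_pow 2 s) (pow_ne_zero 2 hs0')
  have heq : ψ =ᶠ[nhds s] (fun x : ℝ => (1 - x * Real.cos x / Real.sin x) / x ^ 2) := by
    filter_upwards [eventually_ne_nhds hs0'] with x hx
    exact hcot x hx
  have hD : deriv ψ s = (s ^ 2 + s * Real.sin s * Real.cos s - 2 * Real.sin s ^ 2) /
      (s ^ 3 * Real.sin s ^ 2) := by
    rw [heq.deriv_eq, h4.deriv]
    field_simp
    linear_combination (s ^ 2) * Real.sin_sq_add_cos_sq s
  -- numerator nonnegativity
  have hN : 0 ≤ s ^ 2 + s * Real.sin s * Real.cos s - 2 * Real.sin s ^ 2 := by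
    have h2s := auxC18 (2 * s) ⟨by positivity, by linarith⟩
    rw [Real.sin_two_mul, Real.cos_two_mul] at h2s
    nlinarith [Real.sin_sq_add_cos_sq s]
  set a : ℝ := deriv ψ s / s with ha'
  have ha : 0 ≤ a := by
    rw [ha', hD]
    positivity
  -- value of ψ at s
  have hbval : ψ s = (Real.sin s - s * Real.cos s) / (s ^ 2 * Real.sin s) := by
    rw [hcot s hs0']
    rw [div_eq_div_iff (by positivity) (by positivity)]
    field_simp
  have hsc : 0 < Real.sin s - s * Real.cos s := auxA18 s ⟨hs0, hsπ⟩
  have hb : 0 < ψ s := by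
    rw [hbval]; positivity
  -- a < (ψ s)^2
  have hdiff : ψ s ^ 2 - a =
      Real.sin s * (3 * (Real.sin s - s * Real.cos s) - s ^ 2 * Real.sin s) /
        (s ^ 4 * Real.sin s ^ 2) := by
    rw [hbval, ha', hD]
    field_simp
    linear_combination (s ^ 2) * Real.sin_sq_add_cos_sq s
  have hba : a < ψ s ^ 2 := by
    have hB := auxB18 s ⟨hs0, hsπ⟩
    have : 0 < ψ s ^ 2 - a := by
      rw [hdiff]; positivity
    linarith
  -- bound |P| ≤ s
  have hPle : |P| ≤ s := by
    rw [← Real.sqrt_sq_eq_abs, hs]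
    exact Real.sqrt_le_sqrt (by nlinarith)
  -- rewrite goal
  rw [hΛ v]
  simp only [← hP, ← hQ, ← hs]
  have habs : |Q * (a * Q * P)| = Q ^ 2 * (a * |P|) := by
    rw [abs_mul, abs_mul, abs_mul, abs_of_pos hv₂, abs_of_nonneg ha]
    ring
  rw [habs, Real.sqrt_mul (sq_nonneg Q), Real.sqrt_sq hv₂.le]
  have hsqrtπ : 0 < Real.sqrt π := Real.sqrt_pos.2 Real.pi_pos
  have hkey : Real.sqrt (a * |P|) < ψ s * Real.sqrt π := by
    have h1 : a * |P| < ψ s ^ 2 * π := by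
      calc a * |P| ≤ a * π := mul_le_mul_of_nonneg_left (hPle.trans hsπ.le) ha
        _ < ψ s ^ 2 * π := by nlinarith [Real.pi_pos]
    calc Real.sqrt (a * |P|) < Real.sqrt (ψ s ^ 2 * π) :=
          Real.sqrt_lt_sqrt (by positivity) h1
      _ = ψ s * Real.sqrt π := by
          rw [Real.sqrt_mul (sq_nonneg _), Real.sqrt_sq hb.le]
  have hfinal : 2 / Real.sqrt π * (Q * Real.sqrt (a * |P|)) < 2 * Q * ψ s := by
    have h2 : 2 / Real.sqrt π * (Q * Real.sqrt (a * |P|)) <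
        2 / Real.sqrt π * (Q * (ψ s * Real.sqrt π)) := by
      apply mul_lt_mul_of_pos_left _ (by positivity)
      exact mul_lt_mul_of_pos_left hkey hv₂
    have h3 : 2 / Real.sqrt π * (Q * (ψ s * Real.sqrt π)) = 2 * Q * ψ s := by
      field_simp
    linarith
  have hQ3 : 0 ≤ a * Q ^ 3 := by positivity
  calc 2 / Real.sqrt π * (Q * Real.sqrt (a * |P|)) < 2 * Q * ψ s := hfinal
    _ ≤ Q * (a * Q * Q + 2 * ψ s) := by nlinarith
end
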